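/- arXiv:1305.5444 — 6 statements merged into one kernel-verified Lean document; each statement's English description precedes it below -/
import Mathlib

section
/- Let G be a finite graph with maximum degree d ≥ 2 and let v be a vertex of G. Then the number of connected induced subgraphs of G of order k that contain v is at most (e(d-1))^k. -/
namespace Stmt0Aux

noncomputable section
set_option linter.unusedSectionVars false
set_option linter.unusedVariables false

open Finset SimpleGraph

variable {V : Type*} [Fintype V] [LinearOrder V]

/-- The restriction of `G` to vertices in `s`, as a graph on all of `V`. -/
def Gr (G : SimpleGraph V) (s : Finset V) : SimpleGraph V where
  Adj x y := G.Adj x y ∧ x ∈ s ∧ y ∈ s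
  symm := ⟨fun x y h => ⟨h.1.symm, h.2.2, h.2.1⟩⟩
  loopless := ⟨fun x h => G.loopless.irrefl x h.1⟩

instance (G : SimpleGraph V) [DecidableRel G.Adj] (s : Finset V) :
    DecidableRel (Gr G s).Adj :=
  fun x y => inferInstanceAs (Decidable (G.Adj x y ∧ x ∈ s ∧ y ∈ s))

variable (G : SimpleGraph V) [DecidableRel G.Adj] (v : V) (s : Finset V)

/-- distance from the root inside `s`. -/
def dd (w : V) : ℕ := (Gr G s).dist v w

def cands (w : V) : Finset V :=
  s.filter (fun u => (Gr G s).Adj u w ∧ dd G v s u + 1 = dd G v s w)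

def parent (w : V) : V :=
  if h : (cands G v s w).Nonempty then (cands G v s w).min' h else v

def nbrL (u : V) : List V := (G.neighborFinset u).sort (· ≤ ·)

def nbrE (u x : V) : List V := ((G.neighborFinset u).erase x).sort (· ≤ ·)

/-- the list of "slots" available at the parent of `w`. -/
def plist (w : V) : List V :=
  if parent G v s w = v then nbrL G v
  else nbrE G (parent G v s w) (parent G v s (parent G v s w))

def slot (w : V) : ℕ := (plist G v s w).idxOf w

def addrAux : ℕ → V → List ℕ
  | 0, _ => []
  | n+1, w => addrAux n (parent G v s w) ++ [slot G v s w]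

/-- the address of a vertex: the list of slots leading from the root to it. -/
def addr (w : V) : List ℕ := addrAux G v s (dd G v s w) w

def stepv (u : V) (par : Option V) (j : ℕ) : V × Option V :=
  ((match par with | none => nbrL G u | some x => nbrE G u x).getD j u, some u)

def goWalk : V × Option V → List ℕ → V × Option V
  | st, [] => st
  | st, j :: rest => goWalk (stepv G st.1 st.2 j) rest

/-- decoding an address (independent of `s`!). -/
def follow (l : List ℕ) : V := (goWalk G (v, none) l).1

/-- the set of addresses of vertices of `s`. -/
def TF : Finset (List ℕ) := s.image (addr G v s)

/-- the sorted (lex) list of addresses. -/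
def LL : List (List ℕ) := (TF G v s).sort (· ≤ ·)

/-- the rank of a vertex among addresses. -/
def rk (u : V) : ℕ := List.idxOf (addr G v s u) (LL G v s)

/-- the code of `s`: for each non-root vertex, the rank of its parent
together with its slot. -/
def code : Finset (ℕ × ℕ) :=
  (s.erase v).image (fun w => (rk G v s (parent G v s w), slot G v s w))

/-- hypotheses we carry around. -/
def Good : Prop := v ∈ s ∧ ∀ w ∈ s, (Gr G s).Reachable v w

variable {G v s}

section lex
-- lex order facts for `List ℕ`
lemma list_lt_iff (l l' : List ℕ) : l < l' ↔ List.Lex (· < ·) l l' := Iff.rfl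

lemma list_not_lt_nil (l : List ℕ) : ¬ l < [] := by
  rw [list_lt_iff]; intro h; cases h

lemma list_lt_concat (l : List ℕ) (j : ℕ) : l < l ++ [j] := by
  rw [list_lt_iff]
  induction l with
  | nil => exact List.Lex.nil
  | cons a t ih => exact List.Lex.cons ih

end lex

lemma dd_zero_iff (h : Good G v s) {w : V} (hw : w ∈ s) : dd G v s w = 0 ↔ w = v := by
  unfold dd
  rw [SimpleGraph.dist_eq_zero_iff_eq_or_not_reachable]
  constructor
  · rintro (rfl | hr)
    · rfl
    · exact absurd (h.2 w hw) hr
  · rintro rfl; exact Or.inl rfl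

lemma dd_v : dd G v s v = 0 := SimpleGraph.dist_self

lemma parent_mem_cands (h : Good G v s) {w : V} (hw : w ∈ s) (hwv : w ≠ v) :
    parent G v s w ∈ cands G v s w := by
  have hne : (cands G v s w).Nonempty := by
    obtain ⟨q, hql⟩ := ((h.2 w hw).symm).exists_walk_length_eq_dist
    rw [SimpleGraph.dist_comm] at hql
    cases q with
    | nil => exact absurd rfl hwv
    | @cons _ u _ hadj r =>
      refine ⟨u, ?_⟩
      rw [cands, Finset.mem_filter]
      have hus : u ∈ s := hadj.2.2
      have hdu_le : dd G v s u ≤ r.length := by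
        have := SimpleGraph.dist_le r.reverse
        rwa [SimpleGraph.Walk.length_reverse] at this
      have hrl : r.length + 1 = dd G v s w := by
        simpa [dd] using hql
      have hdw_le : dd G v s w ≤ dd G v s u + 1 := by
        obtain ⟨r', hr'⟩ := (h.2 u hus).exists_walk_length_eq_dist
        have := SimpleGraph.dist_le (r'.concat hadj.symm)
        rwa [SimpleGraph.Walk.length_concat, hr'] at this
      exact ⟨hus, hadj.symm, by omega⟩
  rw [parent, dif_pos hne]
  exact (cands G v s w).min'_mem hne

lemma parent_spec (h : Good G v s) {w : V} (hw : w ∈ s) (hwv : w ≠ v) :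
    parent G v s w ∈ s ∧ (Gr G s).Adj (parent G v s w) w ∧
      dd G v s (parent G v s w) + 1 = dd G v s w := by
  have := parent_mem_cands h hw hwv
  rw [cands, Finset.mem_filter] at this
  exact ⟨this.1, this.2.1, this.2.2⟩

lemma addr_v : addr G v s v = [] := by
  rw [addr, dd_v]; rfl

lemma addr_eq (h : Good G v s) {w : V} (hw : w ∈ s) (hwv : w ≠ v) :
    addr G v s w = addr G v s (parent G v s w) ++ [slot G v s w] := by
  obtain ⟨_, _, hdd⟩ := parent_spec h hw hwv
  rw [addr, addr, ← hdd]
  rfl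

lemma addr_eq_nil_iff (h : Good G v s) {w : V} (hw : w ∈ s) :
    addr G v s w = [] ↔ w = v := by
  constructor
  · intro hnil
    by_contra hwv
    rw [addr_eq h hw hwv] at hnil
    simp at hnil
  · rintro rfl; exact addr_v


lemma goWalk_append (st : V × Option V) (l : List ℕ) (j : ℕ) :
    goWalk G st (l ++ [j]) = stepv G (goWalk G st l).1 (goWalk G st l).2 j := by
  induction l generalizing st with
  | nil => rfl
  | cons a t ih => simpa [goWalk] using ih (stepv G st.1 st.2 a)

lemma plist_mem (h : Good G v s) {w : V} (hw : w ∈ s) (hwv : w ≠ v) :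
    w ∈ plist G v s w := by
  obtain ⟨hps, hpadj, hpdd⟩ := parent_spec h hw hwv
  rw [plist]
  split_ifs with hpv
  · rw [nbrL, Finset.mem_sort, mem_neighborFinset]
    rw [hpv] at hpadj
    exact hpadj.1
  · rw [nbrE, Finset.mem_sort, Finset.mem_erase, mem_neighborFinset]
    obtain ⟨hpps, hppadj, hppdd⟩ := parent_spec h hps hpv
    constructor
    · intro heq
      -- w = parent (parent w) : then dd w = dd (parent w) - 1, contradiction
      rw [← heq] at hppdd
      omega
    · exact hpadj.1

lemma getD_plist (h : Good G v s) {w : V} (hw : w ∈ s) (hwv : w ≠ v) (dflt : V) :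
    (plist G v s w).getD (slot G v s w) dflt = w := by
  have hmem := plist_mem h hw hwv
  have hlt : slot G v s w < (plist G v s w).length :=
    List.idxOf_lt_length_iff.2 hmem
  rw [List.getD_eq_get _ _ ⟨_, hlt⟩]
  exact List.idxOf_get hlt

lemma goWalk_addr (h : Good G v s) :
    ∀ n (w : V), w ∈ s → dd G v s w = n →
      goWalk G (v, none) (addr G v s w)
        = (w, if w = v then none else some (parent G v s w)) := by
  intro n
  induction n using Nat.strong_induction_on with
  | _ n ih =>
    intro w hw hdw
    rcases Nat.eq_zero_or_pos n with rfl | hn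
    · have hwv : w = v := (dd_zero_iff h hw).1 hdw
      subst hwv
      rw [addr_v]
      simp [goWalk]
    · have hwv : w ≠ v := by
        intro heq; rw [heq, dd_v] at hdw; omega
      obtain ⟨hps, hpadj, hpdd⟩ := parent_spec h hw hwv
      rw [addr_eq h hw hwv, goWalk_append,
        ih (dd G v s (parent G v s w)) (by omega) _ hps rfl]
      by_cases hpv : parent G v s w = v
      · rw [if_pos hpv, if_neg hwv]
        have : plist G v s w = nbrL G v := by rw [plist, if_pos hpv]
        simp only [stepv]
        rw [hpv, ← this]
        exact congrArg (fun x => (x, some v)) (getD_plist h hw hwv v)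
      · rw [if_neg hpv, if_neg hwv]
        have : plist G v s w
            = nbrE G (parent G v s w) (parent G v s (parent G v s w)) := by
          rw [plist, if_neg hpv]
        simp only [stepv]
        rw [← this]
        exact congrArg (fun x => (x, some (parent G v s w)))
          (getD_plist h hw hwv _)

lemma follow_addr (h : Good G v s) {w : V} (hw : w ∈ s) :
    follow G v (addr G v s w) = w := by
  rw [follow, goWalk_addr h (dd G v s w) w hw rfl]

lemma addr_injOn (h : Good G v s) : Set.InjOn (addr G v s) ↑s := by
  intro a ha b hb hab
  rw [← follow_addr h ha, ← follow_addr h hb, hab]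

lemma TF_card (h : Good G v s) : (TF G v s).card = s.card :=
  Finset.card_image_of_injOn (addr_injOn h)

lemma mem_LL {x : List ℕ} : x ∈ LL G v s ↔ x ∈ TF G v s := Finset.mem_sort _

lemma LL_length (h : Good G v s) : (LL G v s).length = s.card := by
  rw [LL, Finset.length_sort, TF_card h]

lemma LL_sorted : (LL G v s).SortedLT := Finset.sortedLT_sort _

lemma LL_strictMono : StrictMono (LL G v s).get :=
  LL_sorted.strictMono_get

lemma addr_mem_LL (h : Good G v s) {u : V} (hu : u ∈ s) : addr G v s u ∈ LL G v s :=
  mem_LL.2 (Finset.mem_image_of_mem _ hu)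

lemma rk_lt (h : Good G v s) {u : V} (hu : u ∈ s) : rk G v s u < (LL G v s).length :=
  List.idxOf_lt_length_iff.2 (addr_mem_LL h hu)

lemma get_rk (h : Good G v s) {u : V} (hu : u ∈ s) :
    (LL G v s).get ⟨rk G v s u, rk_lt h hu⟩ = addr G v s u :=
  List.idxOf_get (List.idxOf_lt_length_iff.2 (addr_mem_LL h hu))

lemma LL_get_zero (h : Good G v s) (hv : v ∈ s) (h0 : 0 < (LL G v s).length) :
    (LL G v s).get ⟨0, h0⟩ = [] := by
  have hnil : ([] : List ℕ) ∈ LL G v s := by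
    rw [← addr_v (G := G) (s := s)]
    exact addr_mem_LL h hv
  have hm : List.idxOf ([] : List ℕ) (LL G v s) < (LL G v s).length :=
    List.idxOf_lt_length_iff.2 hnil
  have hget : (LL G v s).get ⟨_, hm⟩ = ([] : List ℕ) := List.idxOf_get _
  rcases Nat.eq_zero_or_pos (List.idxOf ([] : List ℕ) (LL G v s)) with h0' | h0'
  · rw [← hget]
    congr 1
    exact Fin.ext h0'.symm
  · exfalso
    have := LL_strictMono (a := ⟨0, h0⟩) (b := ⟨_, hm⟩) h0'
    rw [hget] at this
    exact list_not_lt_nil _ this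

lemma rk_v (h : Good G v s) (hv : v ∈ s) : rk G v s v = 0 := by
  have h0 : 0 < (LL G v s).length := lt_of_le_of_lt (Nat.zero_le _) (rk_lt h hv)
  have hg := get_rk h hv
  rw [addr_v] at hg
  have h2 := LL_get_zero h hv h0
  have hnd : (LL G v s).Nodup := Finset.sort_nodup _ _
  have heq := List.Nodup.get_inj_iff hnd |>.1 (hg.trans h2.symm)
  exact congrArg Fin.val heq

lemma rk_eq_zero_iff (h : Good G v s) (hv : v ∈ s) {u : V} (hu : u ∈ s) :
    rk G v s u = 0 ↔ u = v := by
  constructor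
  · intro h0
    have hg := get_rk h hu
    have h0' : 0 < (LL G v s).length := h0 ▸ rk_lt h hu
    have : addr G v s u = [] := by
      rw [← hg]
      have : (⟨rk G v s u, rk_lt h hu⟩ : Fin (LL G v s).length) = ⟨0, h0'⟩ := Fin.ext h0
      rw [this]
      exact LL_get_zero h hv h0'
    exact (addr_eq_nil_iff h hu).1 this
  · rintro rfl; exact rk_v h hv


lemma rk_inj (h : Good G v s) {a b : V} (ha : a ∈ s) (hb : b ∈ s)
    (hab : rk G v s a = rk G v s b) : a = b := by
  have h1 := get_rk h ha
  have h2 := get_rk h hb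
  have : (⟨rk G v s a, rk_lt h ha⟩ : Fin (LL G v s).length)
       = ⟨rk G v s b, rk_lt h hb⟩ := Fin.ext hab
  rw [this, h2] at h1
  exact addr_injOn h hb ha h1 |>.symm

lemma slot_inj (h : Good G v s) {a b : V} (ha : a ∈ s) (hav : a ≠ v)
    (hb : b ∈ s) (hbv : b ≠ v) (hp : parent G v s a = parent G v s b)
    (hs : slot G v s a = slot G v s b) : a = b := by
  have hpl : plist G v s a = plist G v s b := by
    rw [plist, plist, hp]
  have h1 := getD_plist h ha hav v
  rw [hs, hpl] at h1
  have h2 := getD_plist h hb hbv v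
  exact h1.symm.trans h2

lemma code_card (h : Good G v s) (hv : v ∈ s) :
    (code G v s).card = s.card - 1 := by
  rw [code, Finset.card_image_of_injOn, Finset.card_erase_of_mem hv]
  intro a ha b hb hab
  rw [Finset.coe_erase, Set.mem_diff] at ha hb
  have ha' : a ∈ s := ha.1
  have hb' : b ∈ s := hb.1
  have hav : a ≠ v := by simpa using ha.2
  have hbv : b ≠ v := by simpa using hb.2
  have h1 : rk G v s (parent G v s a) = rk G v s (parent G v s b) :=
    congrArg Prod.fst hab
  have h2 : slot G v s a = slot G v s b := congrArg Prod.snd hab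
  have hp : parent G v s a = parent G v s b :=
    rk_inj h (parent_spec h ha' hav).1 (parent_spec h hb' hbv).1 h1
  exact slot_inj h ha' hav hb' hbv hp h2

/-- the universe of possible code entries. -/
def UU (k d : ℕ) : Finset (ℕ × ℕ) :=
  ({0} : Finset ℕ) ×ˢ Finset.range d ∪ (Finset.Ico 1 k) ×ˢ Finset.range (d-1)

lemma code_subset {d : ℕ} (h : Good G v s) (hv : v ∈ s)
    (hdeg : ∀ u : V, G.degree u ≤ d) :
    code G v s ⊆ UU s.card d := by
  intro x hx
  rw [code, Finset.mem_image] at hx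
  obtain ⟨w, hw, rfl⟩ := hx
  rw [Finset.mem_erase] at hw
  obtain ⟨hwv, hws⟩ := hw
  obtain ⟨hps, hpadj, hpdd⟩ := parent_spec h hws hwv
  have hslot : slot G v s w < (plist G v s w).length :=
    List.idxOf_lt_length_iff.2 (plist_mem h hws hwv)
  rw [UU, Finset.mem_union]
  by_cases hpv : parent G v s w = v
  · left
    rw [Finset.mem_product]
    refine ⟨by simp [hpv, rk_v h hv], ?_⟩
    rw [Finset.mem_range]
    have : (plist G v s w).length = G.degree v := by
      rw [plist, if_pos hpv, nbrL, Finset.length_sort,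
        SimpleGraph.card_neighborFinset_eq_degree]
    have := hdeg v
    omega
  · right
    rw [Finset.mem_product, Finset.mem_Ico, Finset.mem_range]
    obtain ⟨hpps, hppadj, hppdd⟩ := parent_spec h hps hpv
    have hlen : (plist G v s w).length = G.degree (parent G v s w) - 1 := by
      rw [plist, if_neg hpv, nbrE, Finset.length_sort,
        Finset.card_erase_of_mem, SimpleGraph.card_neighborFinset_eq_degree]
      rw [mem_neighborFinset]
      exact hppadj.1.symm
    have hd := hdeg (parent G v s w)
    refine ⟨⟨?_, ?_⟩, by omega⟩
    · have : rk G v s (parent G v s w) ≠ 0 := by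
        intro h0
        exact hpv ((rk_eq_zero_iff h hv hps).1 h0)
      omega
    · have := rk_lt h hps
      rw [LL_length h] at this
      exact this


variable (G v s) in
/-- candidate children addresses built from code entries with parent rank `≤ n`. -/
def Wn (n : ℕ) : Finset (List ℕ) :=
  ((code G v s).filter (fun qj => qj.1 ≤ n)).image
    (fun qj => (LL G v s).getD qj.1 [] ++ [qj.2])

variable (G v s) in
/-- already placed addresses. -/
def Pn (n : ℕ) : Finset (List ℕ) :=
  (Finset.range (n+1)).image (fun q => (LL G v s).getD q [])

lemma LL_nodup : (LL G v s).Nodup := Finset.sort_nodup _ _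

lemma get_succ_mem (h : Good G v s) (hv : v ∈ s) (n : ℕ)
    (hn : n+1 < (LL G v s).length) :
    (LL G v s).get ⟨n+1, hn⟩ ∈ Wn G v s n \ Pn G v s n := by
  set x := (LL G v s).get ⟨n+1, hn⟩ with hx
  have hxT : x ∈ TF G v s := mem_LL.1 (List.get_mem _ _)
  rw [TF, Finset.mem_image] at hxT
  obtain ⟨w, hws, hwx⟩ := hxT
  have h0 : 0 < (LL G v s).length := lt_of_le_of_lt (Nat.zero_le _) hn
  have hwv : w ≠ v := by
    rintro rfl
    rw [addr_v] at hwx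
    have hlt := LL_strictMono (a := ⟨0, h0⟩) (b := ⟨n+1, hn⟩) (Nat.succ_pos n)
    rw [← hx, ← hwx] at hlt
    exact list_not_lt_nil _ hlt
  have hxw : x = addr G v s (parent G v s w) ++ [slot G v s w] := by
    rw [← hwx, addr_eq h hws hwv]
  have hps := (parent_spec h hws hwv).1
  have hrkp : rk G v s (parent G v s w) < n + 1 := by
    have hlt : addr G v s (parent G v s w) < x := by
      rw [hxw]; exact list_lt_concat _ _
    rw [← get_rk h hps, hx] at hlt
    exact (LL_strictMono.lt_iff_lt).1 hlt
  have hgetD : (LL G v s).getD (rk G v s (parent G v s w)) []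
      = addr G v s (parent G v s w) := by
    rw [List.getD_eq_get _ _ ⟨_, (rk_lt h hps)⟩]
    exact get_rk h hps
  rw [Finset.mem_sdiff]
  constructor
  · rw [Wn, Finset.mem_image]
    refine ⟨(rk G v s (parent G v s w), slot G v s w), ?_, ?_⟩
    · rw [Finset.mem_filter]
      refine ⟨?_, by omega⟩
      rw [code, Finset.mem_image]
      exact ⟨w, Finset.mem_erase.2 ⟨hwv, hws⟩, rfl⟩
    · rw [hgetD, ← hxw]
  · rw [Pn, Finset.mem_image]
    rintro ⟨q, hq, hqx⟩
    rw [Finset.mem_range] at hq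
    have hql : q < (LL G v s).length := lt_trans hq hn
    rw [List.getD_eq_get _ _ ⟨_, hql⟩] at hqx
    have := List.Nodup.get_inj_iff (LL_nodup (G := G) (v := v) (s := s)) |>.1 (hqx.trans hx.symm ▸ hqx)
    -- q = n+1 contradiction
    have h2 : (LL G v s).get ⟨q, hql⟩ = (LL G v s).get ⟨n+1, hn⟩ := hqx
    have h3 := List.Nodup.get_inj_iff (LL_nodup (G := G) (v := v) (s := s)) |>.1 h2
    have : q = n + 1 := congrArg Fin.val h3
    omega

lemma get_succ_min (h : Good G v s) (hv : v ∈ s) (n : ℕ)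
    (hn : n+1 < (LL G v s).length) :
    ∀ y ∈ Wn G v s n \ Pn G v s n, (LL G v s).get ⟨n+1, hn⟩ ≤ y := by
  intro y hy
  rw [Finset.mem_sdiff] at hy
  obtain ⟨hyW, hyP⟩ := hy
  rw [Wn, Finset.mem_image] at hyW
  obtain ⟨qj, hqj, hqy⟩ := hyW
  rw [Finset.mem_filter] at hqj
  obtain ⟨hqc, hql⟩ := hqj
  rw [code, Finset.mem_image] at hqc
  obtain ⟨w₀, hw₀, hqe⟩ := hqc
  rw [Finset.mem_erase] at hw₀
  obtain ⟨hw₀v, hw₀s⟩ := hw₀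
  have hps := (parent_spec h hw₀s hw₀v).1
  have hq1 : qj.1 = rk G v s (parent G v s w₀) := by rw [← hqe]
  have hq2 : qj.2 = slot G v s w₀ := by rw [← hqe]
  have hqlen : qj.1 < (LL G v s).length := by
    rw [hq1]; exact rk_lt h hps
  have hgq : (LL G v s).getD qj.1 [] = addr G v s (parent G v s w₀) := by
    rw [List.getD_eq_get _ _ ⟨_, hqlen⟩]
    have : (⟨qj.1, hqlen⟩ : Fin (LL G v s).length)
        = ⟨rk G v s (parent G v s w₀), rk_lt h hps⟩ := Fin.ext hq1
    rw [this]
    exact get_rk h hps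
  have hyaddr : y = addr G v s w₀ := by
    rw [← hqy, hgq, hq2, ← addr_eq h hw₀s hw₀v]
  have hyget : (LL G v s).get ⟨rk G v s w₀, rk_lt h hw₀s⟩ = y := by
    rw [get_rk h hw₀s, hyaddr]
  have hrk : n + 1 ≤ rk G v s w₀ := by
    by_contra hcon
    push_neg at hcon
    apply hyP
    rw [Pn, Finset.mem_image]
    refine ⟨rk G v s w₀, Finset.mem_range.2 hcon, ?_⟩
    rw [List.getD_eq_get _ _ ⟨_, (rk_lt h hw₀s)⟩, hyget]
  rw [← hyget]
  exact (LL_strictMono.monotone (a := ⟨n+1, hn⟩) (b := ⟨rk G v s w₀, rk_lt h hw₀s⟩) hrk)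

lemma get_succ_char (h : Good G v s) (hv : v ∈ s) (n : ℕ)
    (hn : n+1 < (LL G v s).length) :
    (LL G v s).get ⟨n+1, hn⟩
      = (Wn G v s n \ Pn G v s n).min' ⟨_, get_succ_mem h hv n hn⟩ := by
  apply le_antisymm
  · exact Finset.le_min' _ _ _ (get_succ_min h hv n hn)
  · exact Finset.min'_le _ _ (get_succ_mem h hv n hn)

lemma LL_eq {s' : Finset V} (h : Good G v s) (h' : Good G v s')
    (hv : v ∈ s) (hv' : v ∈ s') (hcard : s.card = s'.card)
    (hcode : code G v s = code G v s') : LL G v s = LL G v s' := by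
  have hlen : (LL G v s).length = (LL G v s').length := by
    rw [LL_length h, LL_length h', hcard]
  have key : ∀ n (h1 : n < (LL G v s).length) (h2 : n < (LL G v s').length),
      (LL G v s).get ⟨n, h1⟩ = (LL G v s').get ⟨n, h2⟩ := by
    intro n
    induction n using Nat.strong_induction_on with
    | _ n ih =>
      intro h1 h2
      match n, h1, h2 with
      | 0, h1, h2 => rw [LL_get_zero h hv, LL_get_zero h' hv']
      | Nat.succ m, h1, h2 =>
        have hW : Wn G v s m = Wn G v s' m := by
          rw [Wn, Wn, hcode]
          apply Finset.image_congr
          intro qj hqj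
          rw [Finset.mem_coe, Finset.mem_filter] at hqj
          have hq1 : qj.1 < (LL G v s).length := lt_of_le_of_lt hqj.2 (lt_of_lt_of_le (Nat.lt_succ_self m) (le_of_lt h1))
          have hq2 : qj.1 < (LL G v s').length := hlen ▸ hq1
          show (LL G v s).getD qj.1 [] ++ [qj.2] = (LL G v s').getD qj.1 [] ++ [qj.2]
          rw [List.getD_eq_get _ _ ⟨_, hq1⟩, List.getD_eq_get _ _ ⟨_, hq2⟩,
            ih qj.1 (lt_of_le_of_lt hqj.2 (Nat.lt_succ_self m)) hq1 hq2]
        have hP : Pn G v s m = Pn G v s' m := by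
          rw [Pn, Pn]
          apply Finset.image_congr
          intro q hq
          rw [Finset.mem_coe, Finset.mem_range] at hq
          have hq1 : q < (LL G v s).length := lt_trans hq h1
          have hq2 : q < (LL G v s').length := hlen ▸ hq1
          show (LL G v s).getD q [] = (LL G v s').getD q []
          rw [List.getD_eq_get _ _ ⟨_, hq1⟩, List.getD_eq_get _ _ ⟨_, hq2⟩,
            ih q hq hq1 hq2]
        rw [get_succ_char h hv m h1, get_succ_char h' hv' m h2]
        have hmin : ∀ {A B : Finset (List ℕ)} (hA : A.Nonempty) (hB : B.Nonempty),
            A = B → A.min' hA = B.min' hB := by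
          rintro A B hA hB rfl; rfl
        exact hmin _ _ (by rw [hW, hP])
  exact List.ext_get hlen key

lemma code_injective {s' : Finset V} (h : Good G v s) (h' : Good G v s')
    (hv : v ∈ s) (hv' : v ∈ s') (hcard : s.card = s'.card)
    (hcode : code G v s = code G v s') : s = s' := by
  have hLL := LL_eq h h' hv hv' hcard hcode
  have hTF : TF G v s = TF G v s' := by
    ext x
    rw [← mem_LL, ← mem_LL, hLL]
  have himg : ∀ (t : Finset V), Good G v t →
      (TF G v t).image (follow G v) = t := by
    intro t ht
    rw [TF, Finset.image_image]
    rw [show ((follow G v) ∘ (addr G v t)) = fun w => follow G v (addr G v t w) from rfl]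
    have : ∀ w ∈ t, follow G v (addr G v t w) = id w := fun w hw => follow_addr ht hw
    rw [Finset.image_congr this, Finset.image_id]
  rw [← himg s h, ← himg s' h', hTF]


lemma UU_card {k d : ℕ} (hk : 1 ≤ k) (hd : 1 ≤ d) :
    (UU k d).card = (d-1)*k+1 := by
  rw [UU, Finset.card_union_of_disjoint, Finset.card_product,
    Finset.card_product, Finset.card_singleton, Finset.card_range,
    Nat.card_Ico, Finset.card_range]
  · obtain ⟨d', rfl⟩ := Nat.exists_eq_add_of_le hd
    obtain ⟨k', rfl⟩ := Nat.exists_eq_add_of_le hk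
    simp only [Nat.add_sub_cancel_left, one_mul]
    ring
  · rw [Finset.disjoint_left]
    rintro ⟨a, b⟩ hab hab'
    rw [Finset.mem_product, Finset.mem_singleton] at hab
    rw [Finset.mem_product, Finset.mem_Ico] at hab'
    omega

theorem card_bound (G : SimpleGraph V) [DecidableRel G.Adj] (d k : ℕ)
    (hd : 1 ≤ d) (hdeg : ∀ u : V, G.degree u ≤ d) (v : V) :
    ({s : Finset V | s.card = k ∧ v ∈ s ∧ (G.induce (↑s : Set V)).Connected} :
      Set (Finset V)).ncard ≤ ((d-1)*k+1).choose (k-1) := by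
  rcases Nat.eq_zero_or_pos k with rfl | hk
  · have hempty : ({s : Finset V | s.card = 0 ∧ v ∈ s ∧
        (G.induce (↑s : Set V)).Connected} : Set (Finset V)) = ∅ := by
      ext s
      simp only [Set.mem_setOf_eq, Set.mem_empty_iff_false, iff_false, not_and]
      intro hc hv
      rw [Finset.card_eq_zero] at hc
      subst hc
      exact absurd hv (Finset.notMem_empty v)
    rw [hempty]
    simp
  · have hGood : ∀ s : Finset V, s.card = k → v ∈ s →
        (G.induce (↑s : Set V)).Connected → Good G v s := by
      intro s hcard hv hconn
      refine ⟨hv, fun w hw => ?_⟩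
      have hv' : v ∈ (↑s : Set V) := hv
      have hw' : w ∈ (↑s : Set V) := hw
      let f : G.induce (↑s : Set V) →g Gr G s :=
        ⟨Subtype.val, fun {a b} hab => ⟨hab, a.2, b.2⟩⟩
      exact (hconn.preconnected ⟨v, hv'⟩ ⟨w, hw'⟩).map f
    have hle := Set.ncard_le_ncard_of_injOn (code G v)
      (s := {s : Finset V | s.card = k ∧ v ∈ s ∧ (G.induce (↑s : Set V)).Connected})
      (t := ↑(Finset.powersetCard (k-1) (UU k d)))
      (fun s hs => by
        obtain ⟨hcard, hv, hconn⟩ := hs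
        have hg := hGood s hcard hv hconn
        rw [Finset.mem_coe, Finset.mem_powersetCard]
        constructor
        · have := code_subset hg hv hdeg
          rwa [hcard] at this
        · rw [code_card hg hv, hcard])
      (fun s hs t ht hst =>
        code_injective (hGood s hs.1 hs.2.1 hs.2.2) (hGood t ht.1 ht.2.1 ht.2.2)
          hs.2.1 ht.2.1 (hs.1.trans ht.1.symm) hst)
      (Set.toFinite _)
    rw [Set.ncard_coe_finset, Finset.card_powersetCard, UU_card hk hd] at hle
    exact hle


lemma choose_le_real (n j : ℕ) :
    ((n.choose j : ℕ) : ℝ) ≤ (n : ℝ)^j / (j.factorial : ℝ) := by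
  rw [le_div_iff₀ (by positivity)]
  have h3 : j.factorial * n.choose j ≤ n ^ j :=
    Nat.descFactorial_eq_factorial_mul_choose n j ▸ Nat.descFactorial_le_pow n j
  calc ((n.choose j : ℕ) : ℝ) * (j.factorial : ℝ)
      = ((j.factorial * n.choose j : ℕ) : ℝ) := by push_cast; ring
    _ ≤ ((n^j : ℕ) : ℝ) := Nat.cast_le.2 h3
    _ = (n:ℝ)^j := by push_cast; ring

lemma analytic_bound {d k : ℕ} (hd : 2 ≤ d) :
    ((((d-1)*k+1).choose (k-1) : ℕ) : ℝ) ≤ (Real.exp 1 * ((d:ℝ) - 1)) ^ k := by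
  have hd1 : (1:ℝ) ≤ (d:ℝ) - 1 := by
    have : (2:ℝ) ≤ (d:ℝ) := by exact_mod_cast hd
    linarith
  have he1 : (1:ℝ) ≤ Real.exp 1 := Real.one_le_exp (by norm_num)
  have hcast : ((d:ℝ) - 1) = ((d - 1 : ℕ) : ℝ) := by
    rw [Nat.cast_sub (by omega), Nat.cast_one]
  match k with
  | 0 => simp
  | 1 =>
    have h1 : ((d-1)*1+1) = d := by omega
    rw [h1, pow_one]
    norm_num
    calc (1:ℝ) ≤ (d:ℝ) - 1 := hd1
      _ ≤ Real.exp 1 * ((d:ℝ) - 1) := le_mul_of_one_le_left (by linarith) he1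
  | (m+2) =>
    set k := m + 2 with hk
    have hsub1 : k - 1 = m + 1 := rfl
    have hchoose : ((d-1)*k+1).choose (k-1)
        = ((d-1)*k).choose m + ((d-1)*k).choose (m+1) := by
      rw [hsub1]; exact Nat.choose_succ_succ ((d-1)*k) m
    have hb : ∀ j : ℕ, ((((d-1)*k).choose j : ℕ) : ℝ)
        ≤ ((d:ℝ)-1)^j * ((k:ℝ)^j / (j.factorial : ℝ)) := by
      intro j
      have hcr := choose_le_real ((d-1)*k) j
      have hcast2 : (((d-1)*k : ℕ) : ℝ) = ((d:ℝ)-1) * (k:ℝ) := by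
        rw [hcast]; push_cast; ring
      rw [hcast2] at hcr
      calc ((((d-1)*k).choose j : ℕ) : ℝ)
          ≤ (((d:ℝ)-1) * (k:ℝ))^j / (j.factorial:ℝ) := hcr
        _ = ((d:ℝ)-1)^j * ((k:ℝ)^j / (j.factorial:ℝ)) := by
            rw [mul_pow]; ring
    have hexp : (k:ℝ)^m/(m.factorial:ℝ) + (k:ℝ)^(m+1)/((m+1).factorial:ℝ)
        ≤ Real.exp k := by
      have hsum := Real.sum_le_exp_of_nonneg (x := (k:ℝ)) (by positivity) k
      refine le_trans ?_ hsum
      have hpair : ({m, m+1} : Finset ℕ) ⊆ Finset.range k := by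
        intro i hi
        rw [Finset.mem_insert, Finset.mem_singleton] at hi
        rw [Finset.mem_range]
        omega
      have hss := Finset.sum_le_sum_of_subset_of_nonneg
        (f := fun i => (k:ℝ)^i / (i.factorial : ℝ)) hpair
        (fun i _ _ => by positivity)
      rw [Finset.sum_pair (by omega : m ≠ m+1)] at hss
      exact hss
    have hd0 : (0:ℝ) ≤ (d:ℝ) - 1 := by linarith
    have p1 : ((d:ℝ)-1)^m ≤ ((d:ℝ)-1)^k := pow_le_pow_right₀ hd1 (by omega)
    have p2 : ((d:ℝ)-1)^(m+1) ≤ ((d:ℝ)-1)^k := pow_le_pow_right₀ hd1 (by omega)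
    have e1 : ((d:ℝ)-1)^m * ((k:ℝ)^m/(m.factorial:ℝ))
        ≤ ((d:ℝ)-1)^k * ((k:ℝ)^m/(m.factorial:ℝ)) :=
      mul_le_mul_of_nonneg_right p1 (by positivity)
    have e2 : ((d:ℝ)-1)^(m+1) * ((k:ℝ)^(m+1)/((m+1).factorial:ℝ))
        ≤ ((d:ℝ)-1)^k * ((k:ℝ)^(m+1)/((m+1).factorial:ℝ)) :=
      mul_le_mul_of_nonneg_right p2 (by positivity)
    have hmul : ((d:ℝ)-1)^k * ((k:ℝ)^m/(m.factorial:ℝ) + (k:ℝ)^(m+1)/((m+1).factorial:ℝ))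
        ≤ ((d:ℝ)-1)^k * Real.exp k :=
      mul_le_mul_of_nonneg_left hexp (pow_nonneg hd0 k)
    have hRHS : (Real.exp 1 * ((d:ℝ)-1))^k = ((d:ℝ)-1)^k * Real.exp k := by
      rw [mul_pow, mul_comm]
      congr 1
      rw [← Real.exp_nat_mul]
      norm_num
    rw [hchoose, hRHS, Nat.cast_add]
    rw [mul_add] at hmul
    linarith [hb m, hb (m+1), e1, e2, hmul]

end
end Stmt0Aux

/-- Let `G` be a finite graph with maximum degree `d ≥ 2` and let `v` be
a vertex of `G`. Then the number of connected induced subgraphs of `G` of order `k`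
containing `v` is at most `(e(d-1))^k`. -/
theorem stmt0 {V : Type*} [Fintype V] [DecidableEq V] (G : SimpleGraph V) [DecidableRel G.Adj]
    (d : ℕ) (hd : 2 ≤ d) (hdeg : ∀ w : V, G.degree w ≤ d) (v : V) (k : ℕ) :
    (({s : Finset V | s.card = k ∧ v ∈ s ∧ (G.induce (↑s : Set V)).Connected} :
        Set (Finset V)).ncard : ℝ)
      ≤ (Real.exp 1 * ((d : ℝ) - 1)) ^ k := by
  letI : LinearOrder V :=
    LinearOrder.lift' (Fintype.equivFin V) (Fintype.equivFin V).injective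
  have h1 := Stmt0Aux.card_bound G d k (by omega) hdeg v
  calc (({s : Finset V | s.card = k ∧ v ∈ s ∧ (G.induce (↑s : Set V)).Connected} :
        Set (Finset V)).ncard : ℝ)
      ≤ ((((d-1)*k+1).choose (k-1) : ℕ) : ℝ) := Nat.cast_le.2 h1
    _ ≤ (Real.exp 1 * ((d : ℝ) - 1)) ^ k := Stmt0Aux.analytic_bound hd
end

section
/- In two-neighbour bootstrap percolation on Z^2, if a rectangle D is internally spanned and 1 ≤ k ≤ lg(D)/2, then there exists an internally spanned rectangle D' ⊆ D with k ≤ lg(D') ≤ 2k, where lg denotes the longer side length. -/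
/-- The four lattice neighbours of a site in `ℤ²`. -/
def nbrs (v : ℤ × ℤ) : Set (ℤ × ℤ) :=
  {u | (u.1 = v.1 ∧ (u.2 = v.2 + 1 ∨ u.2 = v.2 - 1)) ∨
       (u.2 = v.2 ∧ (u.1 = v.1 + 1 ∨ u.1 = v.1 - 1))}

/-- One step of two-neighbour bootstrap percolation on `ℤ²`: a site becomes infected
if at least two of its neighbours are infected; infected sites stay infected. -/
def bstep (S : Set (ℤ × ℤ)) : Set (ℤ × ℤ) :=
  S ∪ {v | ∃ u w, u ∈ nbrs v ∧ w ∈ nbrs v ∧ u ≠ w ∧ u ∈ S ∧ w ∈ S}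

/-- The closure `[A]` of an initial set under the bootstrap process. -/
def bclosure (A : Set (ℤ × ℤ)) : Set (ℤ × ℤ) := ⋃ t, bstep^[t] A

/-- The rectangle (droplet) `[(a,b),(c,d)] = {(x,y) : a ≤ x ≤ c, b ≤ y ≤ d}`. -/
def rect (a b c d : ℤ) : Set (ℤ × ℤ) :=
  {v | a ≤ v.1 ∧ v.1 ≤ c ∧ b ≤ v.2 ∧ v.2 ≤ d}

lemma subset_bstep (S : Set (ℤ × ℤ)) : S ⊆ bstep S := Set.subset_union_left

lemma bstep_mono {S T : Set (ℤ × ℤ)} (h : S ⊆ T) : bstep S ⊆ bstep T := by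
  intro v hv
  rcases hv with hv | ⟨u, w, h1, h2, h3, h4, h5⟩
  · exact Or.inl (h hv)
  · exact Or.inr ⟨u, w, h1, h2, h3, h h4, h h5⟩

lemma bstep_iter_mono {S T : Set (ℤ × ℤ)} (h : S ⊆ T) (n : ℕ) :
    bstep^[n] S ⊆ bstep^[n] T := by
  induction n with
  | zero => exact h
  | succ n ih => rw [Function.iterate_succ_apply', Function.iterate_succ_apply']
                 exact bstep_mono ih

lemma bstep_iter_le {S : Set (ℤ × ℤ)} {m n : ℕ} (h : m ≤ n) :
    bstep^[m] S ⊆ bstep^[n] S := by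
  induction n with
  | zero => simp [Nat.le_zero.mp h]
  | succ n ih =>
    rcases Nat.lt_or_ge m (n+1) with h' | h'
    · rw [Function.iterate_succ_apply']
      exact (ih (Nat.lt_succ_iff.mp h')).trans (subset_bstep _)
    · have : m = n + 1 := le_antisymm h h'
      subst this; exact subset_refl _

lemma subset_bclosure (S : Set (ℤ × ℤ)) : S ⊆ bclosure S := by
  intro v hv; exact Set.mem_iUnion.2 ⟨0, hv⟩

lemma bclosure_mono {S T : Set (ℤ × ℤ)} (h : S ⊆ T) : bclosure S ⊆ bclosure T := by
  intro v hv
  rcases Set.mem_iUnion.1 hv with ⟨t, ht⟩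
  exact Set.mem_iUnion.2 ⟨t, bstep_iter_mono h t ht⟩

lemma bstep_bclosure (S : Set (ℤ × ℤ)) : bstep (bclosure S) ⊆ bclosure S := by
  intro v hv
  rcases hv with hv | ⟨u, w, h1, h2, h3, h4, h5⟩
  · exact hv
  · rcases Set.mem_iUnion.1 h4 with ⟨t1, ht1⟩
    rcases Set.mem_iUnion.1 h5 with ⟨t2, ht2⟩
    refine Set.mem_iUnion.2 ⟨max t1 t2 + 1, ?_⟩
    rw [Function.iterate_succ_apply']
    exact Or.inr ⟨u, w, h1, h2, h3, bstep_iter_le (le_max_left _ _) ht1,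
      bstep_iter_le (le_max_right _ _) ht2⟩

lemma bclosure_subset_of_closed {S T : Set (ℤ × ℤ)} (h : S ⊆ T) (hc : bstep T ⊆ T) :
    bclosure S ⊆ T := by
  intro v hv
  rcases Set.mem_iUnion.1 hv with ⟨t, ht⟩
  clear hv
  induction t generalizing v with
  | zero => exact h ht
  | succ n ih =>
    rw [Function.iterate_succ_apply'] at ht
    exact hc (bstep_mono (fun x hx => ih hx) ht)

lemma bclosure_trans {S T : Set (ℤ × ℤ)} (h : T ⊆ bclosure S) :
    bclosure T ⊆ bclosure S :=
  bclosure_subset_of_closed h (bstep_bclosure S)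

lemma bclosure_empty : bclosure (∅ : Set (ℤ × ℤ)) = ∅ := by
  refine subset_antisymm (bclosure_subset_of_closed (subset_refl _) ?_) (Set.empty_subset _)
  intro v hv
  rcases hv with hv | ⟨u, w, _, _, _, h4, _⟩
  · exact hv
  · exact h4

lemma bclosure_singleton (p : ℤ × ℤ) : bclosure {p} = {p} := by
  refine subset_antisymm (bclosure_subset_of_closed (subset_refl _) ?_) (subset_bclosure _)
  intro v hv
  rcases hv with hv | ⟨u, w, _, _, h3, h4, h5⟩
  · exact hv
  · exact absurd (h4.trans h5.symm) h3

lemma rect_finite (a b c d : ℤ) : (rect a b c d).Finite := by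
  have : rect a b c d ⊆ Set.Icc (a, b) (c, d) := by
    intro v hv
    obtain ⟨h1, h2, h3, h4⟩ := hv
    exact ⟨⟨h1, h3⟩, ⟨h2, h4⟩⟩
  exact (Set.finite_Icc _ _).subset this

lemma rect_singleton (x y : ℤ) : rect x y x y = {(x, y)} := by
  ext v
  simp only [rect, Set.mem_setOf_eq, Set.mem_singleton_iff, Prod.ext_iff]
  omega

lemma rect_bounds {a b c d a' b' c' d' : ℤ} (hac : a ≤ c) (hbd : b ≤ d)
    (h : rect a b c d ⊆ rect a' b' c' d') :
    a' ≤ a ∧ c ≤ c' ∧ b' ≤ b ∧ d ≤ d' := by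
  have h1 := h (show (a, b) ∈ rect a b c d by exact ⟨le_refl _, hac, le_refl _, hbd⟩)
  have h2 := h (show (c, d) ∈ rect a b c d by exact ⟨hac, le_refl _, hbd, le_refl _⟩)
  obtain ⟨q1, q2, q3, q4⟩ := h1
  obtain ⟨r1, r2, r3, r4⟩ := h2
  exact ⟨q1, r2, q3, r4⟩

lemma rect_eq_iff {a b c d a' b' c' d' : ℤ} (hac : a ≤ c) (hbd : b ≤ d)
    (h : rect a b c d = rect a' b' c' d') :
    a = a' ∧ b = b' ∧ c = c' ∧ d = d' := by
  have hac' : a' ≤ c' ∧ b' ≤ d' := by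
    have := h ▸ (show (a, b) ∈ rect a b c d from ⟨le_refl _, hac, le_refl _, hbd⟩)
    obtain ⟨q1, q2, q3, q4⟩ := this
    constructor <;> omega
  have b1 := rect_bounds hac hbd h.le
  have b2 := rect_bounds hac'.1 hac'.2 h.ge
  omega

lemma bclosure_idem (S : Set (ℤ × ℤ)) : bclosure (bclosure S) ⊆ bclosure S :=
  bclosure_trans (subset_refl _)

lemma row_fill (S : Set (ℤ × ℤ)) (a c x y e : ℤ) (he : e = 1 ∨ e = -1)
    (hax : a ≤ x) (hxc : x ≤ c)
    (hrow : ∀ x', a ≤ x' → x' ≤ c → (x', y) ∈ S) (hx : (x, y + e) ∈ S) :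
    ∀ x', a ≤ x' → x' ≤ c → (x', y + e) ∈ bclosure S := by
  have key : ∀ n : ℕ, ∀ x' : ℤ, a ≤ x' → x' ≤ c → (x' - x).natAbs ≤ n →
      (x', y + e) ∈ bstep^[n] S := by
    intro n
    induction n with
    | zero =>
      intro x' h1 h2 h3
      have : x' = x := by omega
      subst this; exact hx
    | succ n ih =>
      intro x' h1 h2 h3
      by_cases hle : (x' - x).natAbs ≤ n
      · exact bstep_iter_le (Nat.le_succ n) (ih x' h1 h2 hle)
      · obtain ⟨x'', hxa, hxc2, hnat, hnbr⟩ :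
            ∃ x'', a ≤ x'' ∧ x'' ≤ c ∧ (x'' - x).natAbs ≤ n ∧ (x'' = x' + 1 ∨ x'' = x' - 1) := by
          rcases lt_or_ge x x' with h | h
          · exact ⟨x' - 1, by omega, by omega, by omega, Or.inr rfl⟩
          · exact ⟨x' + 1, by omega, by omega, by omega, Or.inl rfl⟩
        rw [Function.iterate_succ_apply']
        refine Or.inr ⟨(x'', y + e), (x', y), Or.inr ⟨rfl, hnbr⟩, Or.inl ⟨rfl, by omega⟩,
          ?_, ih x'' hxa hxc2 hnat, bstep_iter_le (Nat.zero_le n) (hrow x' h1 h2)⟩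
        simp only [ne_eq, Prod.ext_iff, not_and]
        intro _; omega
  intro x' h1 h2
  exact Set.mem_iUnion.2 ⟨_, key _ x' h1 h2 le_rfl⟩

lemma col_fill (S : Set (ℤ × ℤ)) (b d y x e : ℤ) (he : e = 1 ∨ e = -1)
    (hby : b ≤ y) (hyd : y ≤ d)
    (hcol : ∀ y', b ≤ y' → y' ≤ d → (x, y') ∈ S) (hy : (x + e, y) ∈ S) :
    ∀ y', b ≤ y' → y' ≤ d → (x + e, y') ∈ bclosure S := by
  have key : ∀ n : ℕ, ∀ y' : ℤ, b ≤ y' → y' ≤ d → (y' - y).natAbs ≤ n →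
      (x + e, y') ∈ bstep^[n] S := by
    intro n
    induction n with
    | zero =>
      intro y' h1 h2 h3
      have : y' = y := by omega
      subst this; exact hy
    | succ n ih =>
      intro y' h1 h2 h3
      by_cases hle : (y' - y).natAbs ≤ n
      · exact bstep_iter_le (Nat.le_succ n) (ih y' h1 h2 hle)
      · obtain ⟨y'', hya, hyc2, hnat, hnbr⟩ :
            ∃ y'', b ≤ y'' ∧ y'' ≤ d ∧ (y'' - y).natAbs ≤ n ∧ (y'' = y' + 1 ∨ y'' = y' - 1) := by
          rcases lt_or_ge y y' with h | h
          · exact ⟨y' - 1, by omega, by omega, by omega, Or.inr rfl⟩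
          · exact ⟨y' + 1, by omega, by omega, by omega, Or.inl rfl⟩
        rw [Function.iterate_succ_apply']
        refine Or.inr ⟨(x + e, y''), (x, y'), Or.inl ⟨rfl, hnbr⟩, Or.inr ⟨rfl, by omega⟩,
          ?_, ih y'' hya hyc2 hnat, bstep_iter_le (Nat.zero_le n) (hcol y' h1 h2)⟩
        simp only [ne_eq, Prod.ext_iff, not_and]
        intro h'; omega
  intro y' h1 h2
  exact Set.mem_iUnion.2 ⟨_, key _ y' h1 h2 le_rfl⟩

lemma grow_vert : ∀ n : ℕ, ∀ S : Set (ℤ × ℤ), ∀ a b c d b' d' : ℤ, a ≤ c → b ≤ d →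
    b' ≤ b → d ≤ d' → (d' - d + (b - b')).toNat = n → rect a b c d ⊆ S →
    (∀ y, b' ≤ y → y ≤ d' → (y < b ∨ d < y) → ∃ x, a ≤ x ∧ x ≤ c ∧ (x, y) ∈ S) →
    rect a b' c d' ⊆ bclosure S := by
  intro n
  induction n using Nat.strong_induction_on with
  | _ n IH =>
  intro S a b c d b' d' hac hbd hb' hd' hn hsub hseed
  rcases lt_or_ge d d' with hlt | hge
  · obtain ⟨x, hx1, hx2, hxS⟩ := hseed (d + 1) (by omega) (by omega) (by omega)
    have hrow : ∀ x', a ≤ x' → x' ≤ c → (x', d) ∈ S := fun x' h1 h2 => hsub ⟨h1, h2, hbd, le_refl _⟩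
    have filled := row_fill S a c x d 1 (Or.inl rfl) hx1 hx2 hrow hxS
    have hrect2 : rect a b c (d + 1) ⊆ bclosure S := by
      intro v hv
      obtain ⟨h1, h2, h3, h4⟩ := hv
      rcases lt_or_ge d v.2 with h | h
      · have : v = (v.1, d + 1) := by ext <;> simp <;> omega
        rw [this]; exact filled v.1 h1 h2
      · exact subset_bclosure S (hsub ⟨h1, h2, h3, h⟩)
    have := IH (d' - (d+1) + (b - b')).toNat (by omega) (bclosure S) a b c (d+1) b' d'
      hac (by omega) hb' (by omega) rfl hrect2
      (fun y h1 h2 h3 => by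
        obtain ⟨xx, q1, q2, q3⟩ := hseed y h1 h2 (by omega)
        exact ⟨xx, q1, q2, subset_bclosure S q3⟩)
    exact this.trans (bclosure_idem S)
  · rcases lt_or_ge b' b with hlt | hge'
    · obtain ⟨x, hx1, hx2, hxS⟩ := hseed (b - 1) (by omega) (by omega) (by omega)
      have hrow : ∀ x', a ≤ x' → x' ≤ c → (x', b) ∈ S := fun x' h1 h2 => hsub ⟨h1, h2, le_refl _, hbd⟩
      have filled := row_fill S a c x b (-1) (Or.inr rfl) hx1 hx2 hrow (by rw [← sub_eq_add_neg]; exact hxS)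
      have hrect2 : rect a (b - 1) c d ⊆ bclosure S := by
        intro v hv
        obtain ⟨h1, h2, h3, h4⟩ := hv
        rcases lt_or_ge v.2 b with h | h
        · have : v = (v.1, b + -1) := by ext <;> simp <;> omega
          rw [this]; exact filled v.1 h1 h2
        · exact subset_bclosure S (hsub ⟨h1, h2, h, h4⟩)
      have := IH (d' - d + (b - 1 - b')).toNat (by omega) (bclosure S) a (b-1) c d b' d'
        hac (by omega) (by omega) (by omega) rfl hrect2
        (fun y h1 h2 h3 => by
          obtain ⟨xx, q1, q2, q3⟩ := hseed y h1 h2 (by omega)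
          exact ⟨xx, q1, q2, subset_bclosure S q3⟩)
      exact this.trans (bclosure_idem S)
    · have : b' = b ∧ d' = d := by omega
      intro v hv
      obtain ⟨h1, h2, h3, h4⟩ := hv
      exact subset_bclosure S (hsub ⟨h1, h2, by omega, by omega⟩)

lemma grow_horiz : ∀ n : ℕ, ∀ S : Set (ℤ × ℤ), ∀ a b c d a' c' : ℤ, a ≤ c → b ≤ d →
    a' ≤ a → c ≤ c' → (c' - c + (a - a')).toNat = n → rect a b c d ⊆ S →
    (∀ x, a' ≤ x → x ≤ c' → (x < a ∨ c < x) → ∃ y, b ≤ y ∧ y ≤ d ∧ (x, y) ∈ S) →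
    rect a' b c' d ⊆ bclosure S := by
  intro n
  induction n using Nat.strong_induction_on with
  | _ n IH =>
  intro S a b c d a' c' hac hbd ha' hc' hn hsub hseed
  rcases lt_or_ge c c' with hlt | hge
  · obtain ⟨y, hy1, hy2, hyS⟩ := hseed (c + 1) (by omega) (by omega) (by omega)
    have hcol : ∀ y', b ≤ y' → y' ≤ d → (c, y') ∈ S := fun y' h1 h2 => hsub ⟨hac, le_refl _, h1, h2⟩
    have filled := col_fill S b d y c 1 (Or.inl rfl) hy1 hy2 hcol hyS
    have hrect2 : rect a b (c + 1) d ⊆ bclosure S := by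
      intro v hv
      obtain ⟨h1, h2, h3, h4⟩ := hv
      rcases lt_or_ge c v.1 with h | h
      · have : v = (c + 1, v.2) := by ext <;> simp <;> omega
        rw [this]; exact filled v.2 h3 h4
      · exact subset_bclosure S (hsub ⟨h1, h, h3, h4⟩)
    have := IH (c' - (c+1) + (a - a')).toNat (by omega) (bclosure S) a b (c+1) d a' c'
      (by omega) hbd ha' (by omega) rfl hrect2
      (fun x h1 h2 h3 => by
        obtain ⟨yy, q1, q2, q3⟩ := hseed x h1 h2 (by omega)
        exact ⟨yy, q1, q2, subset_bclosure S q3⟩)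
    exact this.trans (bclosure_idem S)
  · rcases lt_or_ge a' a with hlt | hge'
    · obtain ⟨y, hy1, hy2, hyS⟩ := hseed (a - 1) (by omega) (by omega) (by omega)
      have hcol : ∀ y', b ≤ y' → y' ≤ d → (a, y') ∈ S := fun y' h1 h2 => hsub ⟨le_refl _, hac, h1, h2⟩
      have filled := col_fill S b d y a (-1) (Or.inr rfl) hy1 hy2 hcol (by rw [← sub_eq_add_neg]; exact hyS)
      have hrect2 : rect (a - 1) b c d ⊆ bclosure S := by
        intro v hv
        obtain ⟨h1, h2, h3, h4⟩ := hv
        rcases lt_or_ge v.1 a with h | h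
        · have : v = (a + -1, v.2) := by ext <;> simp <;> omega
          rw [this]; exact filled v.2 h3 h4
        · exact subset_bclosure S (hsub ⟨h, h2, h3, h4⟩)
      have := IH (c' - c + (a - 1 - a')).toNat (by omega) (bclosure S) (a-1) b c d a' c'
        (by omega) hbd (by omega) (by omega) rfl hrect2
        (fun x h1 h2 h3 => by
          obtain ⟨yy, q1, q2, q3⟩ := hseed x h1 h2 (by omega)
          exact ⟨yy, q1, q2, subset_bclosure S q3⟩)
      exact this.trans (bclosure_idem S)
    · intro v hv
      obtain ⟨h1, h2, h3, h4⟩ := hv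
      exact subset_bclosure S (hsub ⟨by omega, by omega, h3, h4⟩)
lemma union_subset_bclosure {S T U : Set (ℤ × ℤ)} (h1 : S ⊆ bclosure U) (h2 : T ⊆ bclosure U) :
    bclosure (S ∪ T) ⊆ bclosure U :=
  bclosure_trans (Set.union_subset h1 h2)

lemma merge_x (a1 b1 c1 d1 a2 b2 c2 d2 y0 : ℤ)
    (h1 : a1 ≤ c1) (h2 : b1 ≤ d1) (h3 : a2 ≤ c2) (h4 : b2 ≤ d2)
    (hy1 : b1 ≤ y0) (hy2 : y0 ≤ d1) (hy3 : b2 ≤ y0) (hy4 : y0 ≤ d2)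
    (ha : a1 ≤ a2) (hgap : a2 - c1 ≤ 2) :
    rect a1 (min b1 b2) (max c1 c2) (max d1 d2) ⊆
      bclosure (rect a1 b1 c1 d1 ∪ rect a2 b2 c2 d2) := by
  set S := rect a1 b1 c1 d1 ∪ rect a2 b2 c2 d2 with hS
  have hbridge : ∀ x, c1 < x → x ≤ max c1 c2 → (x, y0) ∈ bclosure S := by
    intro x hx1 hx2
    by_cases hx3 : a2 ≤ x
    · exact subset_bclosure S (Or.inr ⟨hx3, by omega, hy3, hy4⟩)
    · have hx4 : x = c1 + 1 ∧ a2 = c1 + 2 := by omega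
      have : (x, y0) ∈ bstep S := by
        refine Or.inr ⟨(c1, y0), (a2, y0), Or.inr ⟨rfl, Or.inr (by omega)⟩,
          Or.inr ⟨rfl, Or.inl (by omega)⟩, ?_,
          Or.inl ⟨h1, le_refl _, hy1, hy2⟩, Or.inr ⟨le_refl _, h3, hy3, hy4⟩⟩
        simp only [ne_eq, Prod.ext_iff, not_and]
        intro h'; omega
      exact Set.mem_iUnion.2 ⟨1, by rwa [Function.iterate_one]⟩
  have step1 : rect a1 b1 (max c1 c2) d1 ⊆ bclosure S := by
    have := grow_horiz ((max c1 c2) - c1 + (a1 - a1)).toNat (bclosure S) a1 b1 c1 d1 a1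
      (max c1 c2) h1 h2 (le_refl _) (by omega) rfl
      ((Set.subset_union_left).trans (subset_bclosure S))
      (fun x hxa hxc hout => ⟨y0, hy1, hy2, by
        rcases hout with h | h
        · omega
        · exact hbridge x h hxc⟩)
    exact this.trans (bclosure_idem S)
  have step2 : rect a1 (min b1 b2) (max c1 c2) (max d1 d2) ⊆ bclosure (bclosure S) := by
    refine grow_vert ((max d1 d2) - d1 + (b1 - min b1 b2)).toNat (bclosure S) a1 b1
      (max c1 c2) d1 (min b1 b2) (max d1 d2) (by omega) h2 (by omega) (by omega) rfl step1
      (fun y hy5 hy6 hout => ⟨a2, ha, by omega, ?_⟩)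
    refine subset_bclosure S (Or.inr ⟨le_refl _, h3, by omega, by omega⟩)
  exact step2.trans (bclosure_idem S)

lemma merge_y (a1 b1 c1 d1 a2 b2 c2 d2 x0 : ℤ)
    (h1 : a1 ≤ c1) (h2 : b1 ≤ d1) (h3 : a2 ≤ c2) (h4 : b2 ≤ d2)
    (hx1 : a1 ≤ x0) (hx2 : x0 ≤ c1) (hx3 : a2 ≤ x0) (hx4 : x0 ≤ c2)
    (hb : b1 ≤ b2) (hgap : b2 - d1 ≤ 2) :
    rect (min a1 a2) b1 (max c1 c2) (max d1 d2) ⊆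
      bclosure (rect a1 b1 c1 d1 ∪ rect a2 b2 c2 d2) := by
  set S := rect a1 b1 c1 d1 ∪ rect a2 b2 c2 d2 with hS
  have hbridge : ∀ y, d1 < y → y ≤ max d1 d2 → (x0, y) ∈ bclosure S := by
    intro y hy1 hy2
    by_cases hy3 : b2 ≤ y
    · exact subset_bclosure S (Or.inr ⟨hx3, hx4, hy3, by omega⟩)
    · have hy4 : y = d1 + 1 ∧ b2 = d1 + 2 := by omega
      have : (x0, y) ∈ bstep S := by
        refine Or.inr ⟨(x0, d1), (x0, b2), Or.inl ⟨rfl, Or.inr (by omega)⟩,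
          Or.inl ⟨rfl, Or.inl (by omega)⟩, ?_,
          Or.inl ⟨hx1, hx2, h2, le_refl _⟩, Or.inr ⟨hx3, hx4, le_refl _, h4⟩⟩
        simp only [ne_eq, Prod.ext_iff, not_and]
        omega
      exact Set.mem_iUnion.2 ⟨1, by rwa [Function.iterate_one]⟩
  have step1 : rect a1 b1 c1 (max d1 d2) ⊆ bclosure S := by
    have := grow_vert ((max d1 d2) - d1 + (b1 - b1)).toNat (bclosure S) a1 b1 c1 d1 b1
      (max d1 d2) h1 h2 (le_refl _) (by omega) rfl
      ((Set.subset_union_left).trans (subset_bclosure S))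
      (fun y hya hyc hout => ⟨x0, hx1, hx2, by
        rcases hout with h | h
        · omega
        · exact hbridge y h hyc⟩)
    exact this.trans (bclosure_idem S)
  have step2 : rect (min a1 a2) b1 (max c1 c2) (max d1 d2) ⊆ bclosure (bclosure S) := by
    refine grow_horiz ((max c1 c2) - c1 + (a1 - min a1 a2)).toNat (bclosure S) a1 b1
      c1 (max d1 d2) (min a1 a2) (max c1 c2) h1 (by omega) (by omega) (by omega) rfl step1
      (fun x hx5 hx6 hout => ⟨b2, by omega, by omega, ?_⟩)
    refine subset_bclosure S (Or.inr ⟨by omega, by omega, le_refl _, h4⟩)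
  exact step2.trans (bclosure_idem S)
lemma merge_c (a1 b1 c1 d1 a2 b2 c2 d2 : ℤ)
    (h1 : a1 ≤ c1) (h2 : b1 ≤ d1) (h3 : a2 ≤ c2) (h4 : b2 ≤ d2)
    (hx : a2 = c1 + 1) (hy : b2 = d1 + 1 ∨ b1 = d2 + 1) :
    rect (min a1 a2) (min b1 b2) (max c1 c2) (max d1 d2) ⊆
      bclosure (rect a1 b1 c1 d1 ∪ rect a2 b2 c2 d2) := by
  set S := rect a1 b1 c1 d1 ∪ rect a2 b2 c2 d2 with hS
  rcases hy with hy | hy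
  · -- R2 is upper-right, corner point (c1+1, d1)
    have hq : (c1 + 1, d1) ∈ bclosure S := by
      have : (c1 + 1, d1) ∈ bstep S := by
        refine Or.inr ⟨(c1, d1), (c1 + 1, d1 + 1), Or.inr ⟨rfl, Or.inr (by omega)⟩,
          Or.inl ⟨rfl, Or.inl rfl⟩, ?_,
          Or.inl ⟨h1, le_refl _, h2, le_refl _⟩, Or.inr ⟨by omega, by omega, by omega, by omega⟩⟩
        simp only [ne_eq, Prod.ext_iff, not_and]
        omega
      exact Set.mem_iUnion.2 ⟨1, by rwa [Function.iterate_one]⟩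
    have step1 : rect a1 b1 (c1 + 1) d1 ⊆ bclosure S := by
      have := grow_horiz ((c1 + 1) - c1 + (a1 - a1)).toNat (bclosure S) a1 b1 c1 d1 a1
        (c1 + 1) h1 h2 (le_refl _) (by omega) rfl
        ((Set.subset_union_left).trans (subset_bclosure S))
        (fun x hxa hxc hout => ⟨d1, h2, le_refl _, by
          have : x = c1 + 1 := by omega
          rw [this]; exact hq⟩)
      exact this.trans (bclosure_idem S)
    have step2 := merge_y a1 b1 (c1 + 1) d1 a2 b2 c2 d2 (c1 + 1) (by omega) h2 h3 h4
      (by omega) (le_refl _) (by omega) (by omega) (by omega) (by omega)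
    have hsub : bclosure (rect a1 b1 (c1 + 1) d1 ∪ rect a2 b2 c2 d2) ⊆ bclosure S :=
      union_subset_bclosure step1 ((Set.subset_union_right).trans (subset_bclosure S))
    have hfin := (step2.trans hsub)
    have e1 : max (c1 + 1) c2 = max c1 c2 := by omega
    have e2 : min b1 b2 = b1 := by omega
    rw [e1] at hfin
    rw [e2]
    exact hfin
  · -- R2 is lower-right, corner point (c1+1, b1)
    have hq : (c1 + 1, b1) ∈ bclosure S := by
      have : (c1 + 1, b1) ∈ bstep S := by
        refine Or.inr ⟨(c1, b1), (c1 + 1, b1 - 1), Or.inr ⟨rfl, Or.inr (by omega)⟩,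
          Or.inl ⟨rfl, Or.inr rfl⟩, ?_,
          Or.inl ⟨h1, le_refl _, le_refl _, h2⟩, Or.inr ⟨by omega, by omega, by omega, by omega⟩⟩
        simp only [ne_eq, Prod.ext_iff, not_and]
        omega
      exact Set.mem_iUnion.2 ⟨1, by rwa [Function.iterate_one]⟩
    have step1 : rect a1 b1 (c1 + 1) d1 ⊆ bclosure S := by
      have := grow_horiz ((c1 + 1) - c1 + (a1 - a1)).toNat (bclosure S) a1 b1 c1 d1 a1
        (c1 + 1) h1 h2 (le_refl _) (by omega) rfl
        ((Set.subset_union_left).trans (subset_bclosure S))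
        (fun x hxa hxc hout => ⟨b1, le_refl _, h2, by
          have : x = c1 + 1 := by omega
          rw [this]; exact hq⟩)
      exact this.trans (bclosure_idem S)
    have step2 := merge_y a2 b2 c2 d2 a1 b1 (c1 + 1) d1 (c1 + 1) h3 h4 (by omega) h2
      (by omega) (by omega) (by omega) (le_refl _) (by omega) (by omega)
    have hsub : bclosure (rect a2 b2 c2 d2 ∪ rect a1 b1 (c1 + 1) d1) ⊆ bclosure S :=
      union_subset_bclosure ((Set.subset_union_right).trans (subset_bclosure S)) step1
    have hfin := (step2.trans hsub)
    have e1 : min a2 a1 = min a1 a2 := min_comm _ _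
    have e2 : max c2 (c1 + 1) = max c1 c2 := by omega
    have e3 : max d2 d1 = max d1 d2 := max_comm _ _
    have e4 : b2 = min b1 b2 := by omega
    rw [e1, e2, e3, e4] at hfin
    exact hfin

lemma merge_main (a1 b1 c1 d1 a2 b2 c2 d2 : ℤ)
    (h1 : a1 ≤ c1) (h2 : b1 ≤ d1) (h3 : a2 ≤ c2) (h4 : b2 ≤ d2)
    (hdist : max 0 (max (a1 - c2) (a2 - c1)) + max 0 (max (b1 - d2) (b2 - d1)) ≤ 2) :
    rect (min a1 a2) (min b1 b2) (max c1 c2) (max d1 d2) ⊆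
      bclosure (rect a1 b1 c1 d1 ∪ rect a2 b2 c2 d2) := by
  by_cases hgy : b1 ≤ d2 ∧ b2 ≤ d1
  · -- y-intervals overlap
    have hy0 : b1 ≤ max b1 b2 ∧ max b1 b2 ≤ d1 ∧ b2 ≤ max b1 b2 ∧ max b1 b2 ≤ d2 := by omega
    rcases le_total a1 a2 with ha | ha
    · have := merge_x a1 b1 c1 d1 a2 b2 c2 d2 (max b1 b2) h1 h2 h3 h4
        hy0.1 hy0.2.1 hy0.2.2.1 hy0.2.2.2 ha (by omega)
      have e : min a1 a2 = a1 := by omega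
      rw [e]; exact this
    · have := merge_x a2 b2 c2 d2 a1 b1 c1 d1 (max b1 b2) h3 h4 h1 h2
        hy0.2.2.1 hy0.2.2.2 hy0.1 hy0.2.1 ha (by omega)
      have e1 : min a1 a2 = a2 := by omega
      rw [e1, min_comm b1 b2, max_comm c1 c2, max_comm d1 d2, Set.union_comm]
      exact this
  · by_cases hgx : a1 ≤ c2 ∧ a2 ≤ c1
    · -- x-intervals overlap, y-intervals disjoint
      rcases le_total b1 b2 with hb | hb
      · have := merge_y a1 b1 c1 d1 a2 b2 c2 d2 (max a1 a2) h1 h2 h3 h4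
          (by omega) (by omega) (by omega) (by omega) hb (by omega)
        have e : min b1 b2 = b1 := by omega
        rw [e]; exact this
      · have := merge_y a2 b2 c2 d2 a1 b1 c1 d1 (max a1 a2) h3 h4 h1 h2
          (by omega) (by omega) (by omega) (by omega) hb (by omega)
        have e1 : min b1 b2 = b2 := by omega
        rw [e1, min_comm a1 a2, max_comm c1 c2, max_comm d1 d2, Set.union_comm]
        exact this
    · -- both disjoint: gaps are both exactly 1
      have hc : (a2 = c1 + 1 ∨ a1 = c2 + 1) ∧ (b2 = d1 + 1 ∨ b1 = d2 + 1) := by omega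
      rcases hc.1 with hcx | hcx
      · exact merge_c a1 b1 c1 d1 a2 b2 c2 d2 h1 h2 h3 h4 hcx hc.2
      · have := merge_c a2 b2 c2 d2 a1 b1 c1 d1 h3 h4 h1 h2 hcx (by omega)
        rw [min_comm a1 a2, min_comm b1 b2, max_comm c1 c2, max_comm d1 d2, Set.union_comm]
        exact this
abbrev Quad := ℤ × ℤ × ℤ × ℤ

def Rc (r : Quad) : Set (ℤ × ℤ) := rect r.1 r.2.1 r.2.2.1 r.2.2.2

def okQ (r : Quad) : Prop := r.1 ≤ r.2.2.1 ∧ r.2.1 ≤ r.2.2.2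

def gdist (r s : Quad) : ℤ :=
  max 0 (max (r.1 - s.2.2.1) (s.1 - r.2.2.1)) +
  max 0 (max (r.2.1 - s.2.2.2) (s.2.1 - r.2.2.2))

def lgQ (r : Quad) : ℤ := max (r.2.2.1 - r.1 + 1) (r.2.2.2 - r.2.1 + 1)

lemma rect_subset_rect {a b c d A B C D : ℤ} (h1 : A ≤ a) (h2 : c ≤ C) (h3 : B ≤ b)
    (h4 : d ≤ D) : rect a b c d ⊆ rect A B C D := by
  intro v hv
  obtain ⟨q1, q2, q3, q4⟩ := hv
  exact ⟨by omega, by omega, by omega, by omega⟩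

lemma gdist_le_pts {r s : Quad} {u w : ℤ × ℤ} (hu : u ∈ Rc r) (hw : w ∈ Rc s)
    (h : (u.1 - w.1).natAbs + (u.2 - w.2).natAbs ≤ 2) : gdist r s ≤ 2 := by
  simp only [Rc, rect, Set.mem_setOf_eq] at hu hw
  simp only [gdist]
  omega

lemma nbrs_dist {u v : ℤ × ℤ} (h : u ∈ nbrs v) :
    (u.1 - v.1).natAbs + (u.2 - v.2).natAbs = 1 := by
  simp only [nbrs, Set.mem_setOf_eq] at h
  omega

lemma two_nbrs_in_rect {r : Quad} {v u w : ℤ × ℤ} (hu : u ∈ nbrs v) (hw : w ∈ nbrs v)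
    (hne : u ≠ w) (hu2 : u ∈ Rc r) (hw2 : w ∈ Rc r) : v ∈ Rc r := by
  have hne' : ¬(u.1 = w.1 ∧ u.2 = w.2) := fun h => hne (Prod.ext h.1 h.2)
  simp only [nbrs, Set.mem_setOf_eq] at hu hw
  simp only [Rc, rect, Set.mem_setOf_eq] at hu2 hw2 ⊢
  omega

lemma merge_quads {r s : Quad} (hr : okQ r) (hs : okQ s) (hd : gdist r s ≤ 2) :
    Rc (min r.1 s.1, min r.2.1 s.2.1, max r.2.2.1 s.2.2.1, max r.2.2.2 s.2.2.2) ⊆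
      bclosure (Rc r ∪ Rc s) :=
  merge_main r.1 r.2.1 r.2.2.1 r.2.2.2 s.1 s.2.1 s.2.2.1 s.2.2.2
    hr.1 hr.2 hs.1 hs.2 hd
def PInv (A B C D : ℤ) (F : Finset (ℤ × ℤ)) (𝒞 : Finset (Quad × Finset (ℤ × ℤ))) : Prop :=
  (∀ p ∈ 𝒞, okQ p.1 ∧ (↑p.2 : Set (ℤ × ℤ)) ⊆ Rc p.1 ∧ Rc p.1 ⊆ bclosure ↑p.2 ∧
    Rc p.1 ⊆ rect A B C D ∧ p.2.Nonempty) ∧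
  (∀ p ∈ 𝒞, ∀ q ∈ 𝒞, p ≠ q → Disjoint p.2 q.2) ∧
  ((⋃ p ∈ 𝒞, (↑p.2 : Set (ℤ × ℤ))) = ↑F)

def Decomp (A B C D : ℤ) (F : Finset (ℤ × ℤ)) : Prop :=
  ∃ r1 r2 : Quad, ∃ F1 F2 : Finset (ℤ × ℤ), okQ r1 ∧ okQ r2 ∧ F1 ⊆ F ∧ F2 ⊆ F ∧
    Disjoint F1 F2 ∧ F1.Nonempty ∧ F2.Nonempty ∧
    (↑F1 : Set (ℤ × ℤ)) ⊆ Rc r1 ∧ (↑F2 : Set (ℤ × ℤ)) ⊆ Rc r2 ∧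
    Rc r1 ⊆ bclosure ↑F1 ∧ Rc r2 ⊆ bclosure ↑F2 ∧
    Rc r1 ⊆ rect A B C D ∧ Rc r2 ⊆ rect A B C D ∧
    max (C - A + 1) (D - B + 1) ≤ lgQ r1 + lgQ r2 + 2

lemma process (A B C D : ℤ) (F : Finset (ℤ × ℤ))
    (hD : rect A B C D ⊆ bclosure ↑F) :
    ∀ n : ℕ, ∀ 𝒞 : Finset (Quad × Finset (ℤ × ℤ)), 𝒞.card = n → 𝒞.Nonempty →
    PInv A B C D F 𝒞 → (∃ p ∈ 𝒞, Rc p.1 = rect A B C D) ∨ Decomp A B C D F := by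
  intro n
  induction n using Nat.strong_induction_on with
  | _ n IH =>
  intro 𝒞 hcard hne hinv
  obtain ⟨inv1, inv2, inv3⟩ := hinv
  by_cases hex : ∃ p ∈ 𝒞, Rc p.1 = rect A B C D
  · exact Or.inl hex
  by_cases hmer : ∃ p ∈ 𝒞, ∃ q ∈ 𝒞, p ≠ q ∧ gdist p.1 q.1 ≤ 2
  · -- merge two close rectangles
    obtain ⟨p, hp, q, hq, hpq, hdist⟩ := hmer
    obtain ⟨okp, hFp, hClp, hDp, hNp⟩ := inv1 p hp
    obtain ⟨okq, hFq, hClq, hDq, hNq⟩ := inv1 q hq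
    have hq' : q ∈ 𝒞.erase p := Finset.mem_erase.2 ⟨Ne.symm hpq, hq⟩
    let r : Quad := (min p.1.1 q.1.1, min p.1.2.1 q.1.2.1,
      max p.1.2.2.1 q.1.2.2.1, max p.1.2.2.2 q.1.2.2.2)
    let x : Quad × Finset (ℤ × ℤ) := (r, p.2 ∪ q.2)
    have okr : okQ r := by
      obtain ⟨o1, o2⟩ := okp; obtain ⟨o3, o4⟩ := okq
      exact ⟨by simp only [r]; omega, by simp only [r]; omega⟩
    have hRcr : Rc r ⊆ bclosure ↑(p.2 ∪ q.2) := by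
      refine (merge_quads okp okq hdist).trans (union_subset_bclosure ?_ ?_)
      · exact hClp.trans (bclosure_mono (by rw [Finset.coe_union]; exact Set.subset_union_left))
      · exact hClq.trans (bclosure_mono (by rw [Finset.coe_union]; exact Set.subset_union_right))
    have hFr : (↑(p.2 ∪ q.2) : Set (ℤ × ℤ)) ⊆ Rc r := by
      rw [Finset.coe_union]
      have e1 : Rc p.1 ⊆ Rc r := by
        apply rect_subset_rect <;> simp only [r] <;> omega
      have e2 : Rc q.1 ⊆ Rc r := by
        apply rect_subset_rect <;> simp only [r] <;> omega
      exact Set.union_subset (hFp.trans e1) (hFq.trans e2)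
    have hDr : Rc r ⊆ rect A B C D := by
      have b1 := rect_bounds okp.1 okp.2 hDp
      have b2 := rect_bounds okq.1 okq.2 hDq
      apply rect_subset_rect <;> simp only [r] <;> omega
    set E := (𝒞.erase p).erase q with hE
    have hsubE : ∀ y ∈ E, y ∈ 𝒞 := fun y hy =>
      Finset.mem_of_mem_erase (Finset.mem_of_mem_erase hy)
    have hEne : ∀ y ∈ E, y ≠ p ∧ y ≠ q := fun y hy =>
      ⟨Finset.ne_of_mem_erase (Finset.mem_of_mem_erase hy), Finset.ne_of_mem_erase hy⟩
    have hcard' : (insert x E).card < n := by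
      have h2 : E.card = 𝒞.card - 2 := by
        rw [hE, Finset.card_erase_of_mem hq', Finset.card_erase_of_mem hp]
        omega
      have h3 : 2 ≤ 𝒞.card := Finset.one_lt_card.2 ⟨p, hp, q, hq, hpq⟩
      have h4 := Finset.card_insert_le x E
      omega
    have e𝒞 : 𝒞 = insert p (insert q E) := by
      rw [hE, Finset.insert_erase hq', Finset.insert_erase hp]
    have hinv' : PInv A B C D F (insert x E) := by
      refine ⟨?_, ?_, ?_⟩
      · intro y hy
        rcases Finset.mem_insert.1 hy with rfl | hold
        · exact ⟨okr, hFr, hRcr, hDr, Finset.Nonempty.inl hNp⟩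
        · exact inv1 y (hsubE y hold)
      · intro y hy z hz hne
        rcases Finset.mem_insert.1 hy with rfl | holdy <;>
          rcases Finset.mem_insert.1 hz with rfl | holdz
        · exact absurd rfl hne
        · obtain ⟨hz1, hz2⟩ := hEne z holdz
          exact Finset.disjoint_union_left.2
            ⟨inv2 p hp z (hsubE z holdz) (Ne.symm hz1), inv2 q hq z (hsubE z holdz) (Ne.symm hz2)⟩
        · obtain ⟨hy1, hy2⟩ := hEne y holdy
          exact Finset.disjoint_union_right.2
            ⟨inv2 y (hsubE y holdy) p hp hy1, inv2 y (hsubE y holdy) q hq hy2⟩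
        · exact inv2 y (hsubE y holdy) z (hsubE z holdz) hne
      · rw [← inv3]
        conv_rhs => rw [e𝒞]
        rw [Finset.set_biUnion_insert, Finset.set_biUnion_insert, Finset.set_biUnion_insert]
        show (↑(p.2 ∪ q.2) : Set (ℤ × ℤ)) ∪ _ = _
        rw [Finset.coe_union, Set.union_assoc]
    have hne' : (insert x E).Nonempty := ⟨x, Finset.mem_insert_self x E⟩
    rcases IH (insert x E).card hcard' (insert x E) rfl hne' hinv' with hleft | hright
    · obtain ⟨p', hp', hRp'⟩ := hleft
      rcases Finset.mem_insert.1 hp' with rfl | hold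
      · -- the new rectangle equals D: decomposition found
        have heq := rect_eq_iff okr.1 okr.2 hRp'
        refine Or.inr ⟨p.1, q.1, p.2, q.2, okp, okq, ?_, ?_,
          inv2 p hp q hq hpq, hNp, hNq, hFp, hFq, hClp, hClq, hDp, hDq, ?_⟩
        · rw [← Finset.coe_subset, ← inv3]
          intro z hz
          exact Set.mem_biUnion hp hz
        · rw [← Finset.coe_subset, ← inv3]
          intro z hz
          exact Set.mem_biUnion hq hz
        · simp only [r] at heq
          simp only [gdist] at hdist
          have o1 := okp; have o2 := okq
          simp only [okQ] at o1 o2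
          simp only [lgQ]
          omega
      · exact absurd ⟨p', hsubE p' hold, hRp'⟩ hex
    · exact Or.inr hright
  · -- no two rectangles are close: contradiction
    exfalso
    set U : Set (ℤ × ℤ) := ⋃ y ∈ 𝒞, Rc y.1 with hU
    have hclosed : bstep U ⊆ U := by
      intro v hv
      rcases hv with hv | ⟨u, w, h1, h2, h3, h4, h5⟩
      · exact hv
      · simp only [hU, Set.mem_iUnion] at h4 h5 ⊢
        obtain ⟨y, hy, hy2⟩ := h4
        obtain ⟨z, hz, hz2⟩ := h5
        by_cases hyz : y = z
        · subst hyz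
          exact ⟨y, hy, two_nbrs_in_rect h1 h2 h3 hy2 hz2⟩
        · exfalso
          have d1 := nbrs_dist h1
          have d2 := nbrs_dist h2
          have := gdist_le_pts hy2 hz2 (by omega)
          exact hmer ⟨y, hy, z, hz, hyz, this⟩
    have hDU : rect A B C D ⊆ U := by
      refine (hD.trans (bclosure_subset_of_closed ?_ hclosed))
      rw [← inv3]
      refine Set.iUnion₂_mono fun y hy => (inv1 y hy).2.1
    obtain ⟨p0, hp0⟩ := hne
    obtain ⟨okp0, hFp0, hClp0, hDp0, hNp0⟩ := inv1 p0 hp0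
    have hb := rect_bounds okp0.1 okp0.2 hDp0
    have hneq : ¬(A = p0.1.1 ∧ B = p0.1.2.1 ∧ p0.1.2.2.1 = C ∧ p0.1.2.2.2 = D) := by
      rintro ⟨e1, e2, e3, e4⟩
      exact hex ⟨p0, hp0, by simp only [Rc, ← e1, ← e2, e3, e4]⟩
    -- find a point of D adjacent to Rc p0.1 but outside it
    obtain ⟨v, w, hvD, hvnot, hw, hdvw⟩ :
        ∃ v w : ℤ × ℤ, v ∈ rect A B C D ∧ v ∉ Rc p0.1 ∧ w ∈ Rc p0.1 ∧
          (w.1 - v.1).natAbs + (w.2 - v.2).natAbs ≤ 2 := by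
      have okp0' := okp0
      simp only [okQ] at okp0'
      obtain ⟨a0, b0⟩ := okp0'
      rcases (show p0.1.1 > A ∨ p0.1.2.2.1 < C ∨ p0.1.2.1 > B ∨ p0.1.2.2.2 < D by omega)
        with h | h | h | h
      · exact ⟨(p0.1.1 - 1, p0.1.2.1), (p0.1.1, p0.1.2.1),
          ⟨by omega, by omega, by omega, by omega⟩,
          fun hmem => by simp only [Rc, rect, Set.mem_setOf_eq] at hmem; omega,
          ⟨le_refl _, a0, le_refl _, b0⟩, by simp⟩
      · exact ⟨(p0.1.2.2.1 + 1, p0.1.2.1), (p0.1.2.2.1, p0.1.2.1),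
          ⟨by omega, by omega, by omega, by omega⟩,
          fun hmem => by simp only [Rc, rect, Set.mem_setOf_eq] at hmem; omega,
          ⟨a0, le_refl _, le_refl _, b0⟩, by simp⟩
      · exact ⟨(p0.1.1, p0.1.2.1 - 1), (p0.1.1, p0.1.2.1),
          ⟨by omega, by omega, by omega, by omega⟩,
          fun hmem => by simp only [Rc, rect, Set.mem_setOf_eq] at hmem; omega,
          ⟨le_refl _, a0, le_refl _, b0⟩, by simp⟩
      · exact ⟨(p0.1.1, p0.1.2.2.2 + 1), (p0.1.1, p0.1.2.2.2),
          ⟨by omega, by omega, by omega, by omega⟩,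
          fun hmem => by simp only [Rc, rect, Set.mem_setOf_eq] at hmem; omega,
          ⟨le_refl _, a0, b0, le_refl _⟩, by simp⟩
    have hvU := hDU hvD
    simp only [hU, Set.mem_iUnion] at hvU
    obtain ⟨p1, hp1, hv1⟩ := hvU
    have hp01 : p0 ≠ p1 := fun h => hvnot (h ▸ hv1)
    exact hmer ⟨p0, hp0, p1, hp1, hp01, gdist_le_pts hw hv1 hdvw⟩
lemma mainP : ∀ m : ℕ, ∀ F : Finset (ℤ × ℤ), F.card = m → ∀ a b c d k : ℤ, a ≤ c → b ≤ d →
    F.Nonempty → (↑F : Set (ℤ × ℤ)) ⊆ rect a b c d → rect a b c d ⊆ bclosure ↑F →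
    1 ≤ k → k ≤ max (c - a + 1) (d - b + 1) →
    ∃ a' b' c' d' : ℤ, a ≤ a' ∧ a' ≤ c' ∧ c' ≤ c ∧ b ≤ b' ∧ b' ≤ d' ∧ d' ≤ d ∧
      rect a' b' c' d' ⊆ bclosure (↑F ∩ rect a' b' c' d') ∧
      k ≤ max (c' - a' + 1) (d' - b' + 1) ∧ max (c' - a' + 1) (d' - b' + 1) ≤ 2 * k := by
  intro m
  induction m using Nat.strong_induction_on with
  | _ m IH =>
  intro F hFm a b c d k hac hbd hFne hFsub hspan hk1 hk2
  by_cases hsmall : max (c - a + 1) (d - b + 1) ≤ 2 * k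
  · refine ⟨a, b, c, d, le_refl _, hac, le_refl _, le_refl _, hbd, le_refl _, ?_, hk2, hsmall⟩
    have he : (↑F : Set (ℤ × ℤ)) ∩ rect a b c d = ↑F := Set.inter_eq_left.2 hFsub
    rw [he]; exact hspan
  · -- run the rectangles process from singletons
    set 𝒞₀ : Finset (Quad × Finset (ℤ × ℤ)) :=
      F.image (fun v => (((v.1, v.2, v.1, v.2) : Quad), ({v} : Finset (ℤ × ℤ)))) with h𝒞₀
    have hmem : ∀ p ∈ 𝒞₀, ∃ v ∈ F, p = (((v.1, v.2, v.1, v.2) : Quad), ({v} : Finset (ℤ × ℤ))) := by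
      intro p hp
      obtain ⟨v, hv, he⟩ := Finset.mem_image.1 hp
      exact ⟨v, hv, he.symm⟩
    have hRcv : ∀ v : ℤ × ℤ, Rc ((v.1, v.2, v.1, v.2) : Quad) = ({v} : Set (ℤ × ℤ)) := by
      intro v
      show rect v.1 v.2 v.1 v.2 = _
      rw [rect_singleton]
    have hinv : PInv a b c d F 𝒞₀ := by
      refine ⟨?_, ?_, ?_⟩
      · intro p hp
        obtain ⟨v, hv, rfl⟩ := hmem p hp
        refine ⟨⟨le_refl _, le_refl _⟩, ?_, ?_, ?_, Finset.singleton_nonempty v⟩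
        · rw [hRcv, Finset.coe_singleton]
        · rw [hRcv, Finset.coe_singleton]; exact subset_bclosure _
        · rw [hRcv]
          intro u hu
          rw [Set.mem_singleton_iff] at hu
          exact hu ▸ hFsub hv
      · intro p hp q hq hne
        obtain ⟨v, hv, rfl⟩ := hmem p hp
        obtain ⟨w, hw, rfl⟩ := hmem q hq
        have hvw : v ≠ w := fun h => hne (by rw [h])
        simp only [Finset.disjoint_singleton]
        exact hvw
      · ext u
        simp only [Set.mem_iUnion, Finset.mem_coe]
        constructor
        · rintro ⟨p, hp, hu⟩
          obtain ⟨v, hv, rfl⟩ := hmem p hp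
          have he2 : u = v := by simpa using hu
          exact he2 ▸ hv
        · intro hu
          refine ⟨_, Finset.mem_image_of_mem _ hu, ?_⟩
          simp
    have h𝒞ne : 𝒞₀.Nonempty := hFne.image _
    rcases process a b c d F hspan 𝒞₀.card 𝒞₀ rfl h𝒞ne hinv with hleft | hright
    · exfalso
      obtain ⟨p, hp, hRp⟩ := hleft
      obtain ⟨v, hv, rfl⟩ := hmem p hp
      have := rect_eq_iff (le_refl v.1) (le_refl v.2) hRp
      omega
    · obtain ⟨r1, r2, F1, F2, ok1, ok2, hF1F, hF2F, hdisj, hne1, hne2, hsub1, hsub2,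
        hcl1, hcl2, hD1, hD2, hlg⟩ := hright
      obtain ⟨rr, FF, hFF, hFneX, hsubX, hclX, hDX, okX, hkX, hcardX⟩ :
          ∃ rr FF, FF ⊆ F ∧ FF.Nonempty ∧ (↑FF : Set (ℤ × ℤ)) ⊆ Rc rr ∧
            Rc rr ⊆ bclosure ↑FF ∧ Rc rr ⊆ rect a b c d ∧ okQ rr ∧ k ≤ lgQ rr ∧
            FF.card < F.card := by
        have hchoice : k ≤ lgQ r1 ∨ k ≤ lgQ r2 := by
          simp only [lgQ] at hlg ⊢
          omega
        have hlt1 : F1.card < F.card := by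
          obtain ⟨x2, hx2⟩ := hne2
          exact Finset.card_lt_card ((Finset.ssubset_iff_of_subset hF1F).2
            ⟨x2, hF2F hx2, Finset.disjoint_right.1 hdisj hx2⟩)
        have hlt2 : F2.card < F.card := by
          obtain ⟨x1, hx1⟩ := hne1
          exact Finset.card_lt_card ((Finset.ssubset_iff_of_subset hF2F).2
            ⟨x1, hF1F hx1, Finset.disjoint_left.1 hdisj hx1⟩)
        rcases hchoice with hc | hc
        · exact ⟨r1, F1, hF1F, hne1, hsub1, hcl1, hD1, ok1, hc, hlt1⟩
        · exact ⟨r2, F2, hF2F, hne2, hsub2, hcl2, hD2, ok2, hc, hlt2⟩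
      simp only [lgQ] at hkX
      obtain ⟨a', b', c', d', q1, q2, q3, q4, q5, q6, q7, q8, q9⟩ :=
        IH FF.card (by omega) FF rfl rr.1 rr.2.1 rr.2.2.1 rr.2.2.2 k okX.1 okX.2
          hFneX hsubX hclX hk1 hkX
      have hb := rect_bounds okX.1 okX.2 hDX
      refine ⟨a', b', c', d', by omega, q2, by omega, by omega, q5, by omega, ?_, q8, q9⟩
      refine q7.trans (bclosure_mono ?_)
      exact Set.inter_subset_inter_left _ (Finset.coe_subset.2 hFF)

/-- Aizenman–Lebowitz. If a rectangle `D` is internally spanned and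
`1 ≤ k ≤ lg(D)/2`, then there is an internally spanned rectangle `D' ⊆ D` with
`k ≤ lg(D') ≤ 2k`, where `lg` is the longer side length. -/
theorem stmt2 (a b c d k : ℤ) (hac : a ≤ c) (hbd : b ≤ d) (A : Set (ℤ × ℤ))
    (hspan : rect a b c d ⊆ bclosure (A ∩ rect a b c d))
    (hk1 : 1 ≤ k) (hk2 : 2 * k ≤ max (c - a + 1) (d - b + 1)) :
    ∃ a' b' c' d' : ℤ, a ≤ a' ∧ a' ≤ c' ∧ c' ≤ c ∧ b ≤ b' ∧ b' ≤ d' ∧ d' ≤ d ∧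
      rect a' b' c' d' ⊆ bclosure (A ∩ rect a' b' c' d') ∧
      k ≤ max (c' - a' + 1) (d' - b' + 1) ∧ max (c' - a' + 1) (d' - b' + 1) ≤ 2 * k := by
  have hfin : (A ∩ rect a b c d).Finite :=
    (rect_finite a b c d).subset Set.inter_subset_right
  set F := hfin.toFinset with hF
  have hcoe : (↑F : Set (ℤ × ℤ)) = A ∩ rect a b c d := hfin.coe_toFinset
  have hne : F.Nonempty := by
    rw [← Finset.coe_nonempty, hcoe]
    by_contra h
    have he : A ∩ rect a b c d = ∅ := Set.not_nonempty_iff_eq_empty.1 h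
    have := hspan (show (a, b) ∈ rect a b c d from ⟨le_refl _, hac, le_refl _, hbd⟩)
    rw [he, bclosure_empty] at this
    exact this
  have hFsub : (↑F : Set (ℤ × ℤ)) ⊆ rect a b c d := by
    rw [hcoe]; exact Set.inter_subset_right
  have hspan' : rect a b c d ⊆ bclosure ↑F := by rw [hcoe]; exact hspan
  obtain ⟨a', b', c', d', q1, q2, q3, q4, q5, q6, q7, q8, q9⟩ :=
    mainP F.card F rfl a b c d k hac hbd hne hFsub hspan' hk1 (by omega)
  refine ⟨a', b', c', d', q1, q2, q3, q4, q5, q6, ?_, q8, q9⟩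
  refine q7.trans (bclosure_mono ?_)
  rw [hcoe, Set.inter_assoc]
  have : rect a b c d ∩ rect a' b' c' d' = rect a' b' c' d' :=
    Set.inter_eq_right.2 (rect_subset_rect q1 q3 q4 q6)
  rw [this]
end

section
/- In two-neighbour bootstrap percolation on the rectangle D = [(0,0),(t,t)] (with the process confined to D), if the site (0,0) is uninfected at time t, then there exists an up-right path x₁, x₂, …, x_{t+1} of sites in D, with x₁ = (0,0) and each x_{i+1} ∈ {x_i + e₁, x_i + e₂}, all of which are initially uninfected. -/
/-- One step of two-neighbour bootstrap percolation confined to a region `D ⊆ ℤ²`: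
a site of `D` becomes infected if at least two of its neighbours *in `D`* are infected. -/
def bstepIn (D : Set (ℤ × ℤ)) (S : Set (ℤ × ℤ)) : Set (ℤ × ℤ) :=
  S ∪ {v | v ∈ D ∧ ∃ u w, u ∈ nbrs v ∩ D ∧ w ∈ nbrs v ∩ D ∧ u ≠ w ∧ u ∈ S ∧ w ∈ S}

lemma subset_iterate (D A : Set (ℤ × ℤ)) (k : ℕ) : A ⊆ (bstepIn D)^[k] A := by
  induction k with
  | zero => simp
  | succ n ih =>
    rw [Function.iterate_succ_apply']
    exact ih.trans Set.subset_union_left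


/-- In the bootstrap process confined to `D = [(0,0),(t,t)]`, if `(0,0)`
is uninfected at time `t`, then there is an up-right path `x₁,…,x_{t+1}` of sites of `D`,
starting at the origin, all of which are initially uninfected. -/
theorem stmt3 (t : ℕ) (A : Set (ℤ × ℤ)) (hA : A ⊆ rect 0 0 (t : ℤ) (t : ℤ))
    (h0 : ((0 : ℤ), (0 : ℤ)) ∉ (bstepIn (rect 0 0 (t : ℤ) (t : ℤ)))^[t] A) :
    ∃ x : ℕ → ℤ × ℤ, x 0 = ((0 : ℤ), (0 : ℤ)) ∧
      (∀ i < t, x (i + 1) = x i + ((1 : ℤ), (0 : ℤ)) ∨ x (i + 1) = x i + ((0 : ℤ), (1 : ℤ))) ∧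
      (∀ i ≤ t, x i ∈ rect 0 0 (t : ℤ) (t : ℤ) ∧ x i ∉ A) := by
  set D := rect 0 0 (t : ℤ) (t : ℤ) with hDdef
  have key : ∀ n, n ≤ t → ∃ x : ℕ → ℤ × ℤ, x 0 = ((0 : ℤ), (0 : ℤ)) ∧
      (∀ i < n, x (i + 1) = x i + ((1 : ℤ), (0 : ℤ)) ∨ x (i + 1) = x i + ((0 : ℤ), (1 : ℤ))) ∧
      (∀ i ≤ n, x i ∈ D ∧ (x i).1 + (x i).2 = (i : ℤ) ∧ x i ∉ (bstepIn D)^[t - i] A) := by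
    intro n
    induction n with
    | zero =>
      intro _
      refine ⟨fun _ => ((0 : ℤ), (0 : ℤ)), rfl, fun i hi => absurd hi (Nat.not_lt_zero i), ?_⟩
      intro i hi
      interval_cases i
      refine ⟨?_, by simp, by simpa using h0⟩
      · simp only [hDdef, rect, Set.mem_setOf_eq]
        refine ⟨le_refl _, by positivity, le_refl _, by positivity⟩
    | succ n ih =>
      intro hn
      obtain ⟨x, hx0, hstep, hinv⟩ := ih (by omega)
      obtain ⟨hD', hsum, hninf⟩ := hinv n le_rfl
      have hcoord : 0 ≤ (x n).1 ∧ (x n).1 ≤ (t:ℤ) ∧ 0 ≤ (x n).2 ∧ (x n).2 ≤ (t:ℤ) := hD'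
      have hnlt : (n:ℤ) < t := by exact_mod_cast hn
      have hsub : t - n = (t - (n + 1)) + 1 := by omega
      set S := (bstepIn D)^[t - (n + 1)] A with hSdef
      have hninf' : x n ∉ bstepIn D S := by
        rw [hsub, Function.iterate_succ_apply'] at hninf; exact hninf
      have hchoice : ∃ e : ℤ × ℤ, (e = ((1:ℤ),(0:ℤ)) ∨ e = ((0:ℤ),(1:ℤ))) ∧ x n + e ∉ S := by
        by_contra h
        push_neg at h
        have h1 := h ((1:ℤ),(0:ℤ)) (Or.inl rfl)
        have h2 := h ((0:ℤ),(1:ℤ)) (Or.inr rfl)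
        apply hninf'
        refine Set.mem_union_right _ ⟨hD', x n + ((1:ℤ),(0:ℤ)), x n + ((0:ℤ),(1:ℤ)),
          ⟨?_, ?_⟩, ⟨?_, ?_⟩, ?_, h1, h2⟩
        · right; simp [nbrs, Prod.fst_add, Prod.snd_add]
        · simp only [hDdef, rect, Set.mem_setOf_eq, Prod.fst_add, Prod.snd_add]
          constructor <;> [skip; constructor] <;> [skip; skip; skip] <;> omega
        · left; simp [nbrs, Prod.fst_add, Prod.snd_add]
        · simp only [hDdef, rect, Set.mem_setOf_eq, Prod.fst_add, Prod.snd_add]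
          refine ⟨by omega, by omega, by omega, by omega⟩
        · intro hcon
          have := congrArg Prod.snd hcon
          simp [Prod.snd_add] at this
      obtain ⟨e, hecases, heS⟩ := hchoice
      have he1 : 0 ≤ e.1 ∧ 0 ≤ e.2 ∧ e.1 + e.2 = 1 := by
        rcases hecases with rfl | rfl <;> norm_num
      refine ⟨Function.update x (n + 1) (x n + e), ?_, ?_, ?_⟩
      · rw [Function.update_of_ne (by omega)]; exact hx0
      · intro i hi
        rcases Nat.lt_or_ge i n with hi' | hi'
        · rw [Function.update_of_ne (by omega), Function.update_of_ne (by omega)]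
          exact hstep i hi'
        · have : i = n := by omega
          subst this
          rw [Function.update_self, Function.update_of_ne (by omega)]
          rcases hecases with rfl | rfl
          · exact Or.inl rfl
          · exact Or.inr rfl
      · intro i hi
        rcases Nat.lt_or_ge i (n + 1) with hi' | hi'
        · rw [Function.update_of_ne (by omega)]
          exact hinv i (by omega)
        · have : i = n + 1 := by omega
          subst this
          rw [Function.update_self]
          refine ⟨?_, ?_, heS⟩
          · simp only [hDdef, rect, Set.mem_setOf_eq, Prod.fst_add, Prod.snd_add]
            refine ⟨by omega, by omega, by omega, by omega⟩
          · simp only [Prod.fst_add, Prod.snd_add]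
            push_cast
            omega
  obtain ⟨x, hx0, hstep, hinv⟩ := key t le_rfl
  refine ⟨x, hx0, hstep, fun i hi => ⟨(hinv i hi).1, fun hxA => (hinv i hi).2.2
    (subset_iterate D A (t - i) hxA)⟩⟩
end

section
/- In two-neighbour bootstrap percolation on Z², if a (2t+1)×2 rectangle R is initially empty (contains no site of the initial set A, where A may be arbitrary outside R), then the two central sites of R are uninfected at time t. -/
/-- If the `(2t+1)×2` rectangle `R = [(0,0),(2t,1)]` is initially empty
(the initial set `A` may be arbitrary outside `R`), then the two central sites `(t,0)` and
`(t,1)` of `R` are uninfected at time `t`. -/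
theorem stmt5 (t : ℕ) (A : Set (ℤ × ℤ)) (hA : A ∩ rect 0 0 (2 * t : ℤ) 1 = ∅) :
    ((t : ℤ), (0 : ℤ)) ∉ bstep^[t] A ∧ ((t : ℤ), (1 : ℤ)) ∉ bstep^[t] A := by
  have key : ∀ s : ℕ, ∀ x : ℤ, (s : ℤ) ≤ x → x ≤ 2 * t - s →
      ((x, (0:ℤ)) ∉ bstep^[s] A ∧ (x, (1:ℤ)) ∉ bstep^[s] A) := by
    intro s
    induction s with
    | zero =>
      intro x hx1 hx2
      simp only [Function.iterate_zero, id_eq]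
      constructor <;> intro h
      · have : ((x, (0:ℤ))) ∈ A ∩ rect 0 0 (2 * t) 1 := ⟨h, by
          simp only [rect, Set.mem_setOf_eq]; push_cast at hx2; refine ⟨hx1, by omega, by norm_num, by norm_num⟩⟩
        rw [hA] at this; exact this
      · have : ((x, (1:ℤ))) ∈ A ∩ rect 0 0 (2 * t) 1 := ⟨h, by
          simp only [rect, Set.mem_setOf_eq]; push_cast at hx2; refine ⟨hx1, by omega, by norm_num, by norm_num⟩⟩
        rw [hA] at this; exact this
    | succ s ih =>
      intro x hx1 hx2
      push_cast at hx1 hx2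
      have h0 := ih x (by omega) (by omega)
      have hm := ih (x - 1) (by omega) (by omega)
      have hp := ih (x + 1) (by omega) (by omega)
      rw [Function.iterate_succ_apply']
      set S := bstep^[s] A with hS
      have key0 : ∀ u : ℤ × ℤ, u ∈ nbrs (x, (0:ℤ)) → u ∈ S → u = (x, -1) := by
        rintro ⟨u1, u2⟩ hu huS
        simp only [nbrs, Set.mem_setOf_eq] at hu
        obtain ⟨rfl, h | h⟩ | ⟨rfl, h | h⟩ := hu
        · norm_num at h; subst h; exact absurd huS h0.2
        · norm_num at h; subst h; rfl
        · subst h; exact absurd huS hp.1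
        · subst h; exact absurd huS hm.1
      have key1 : ∀ u : ℤ × ℤ, u ∈ nbrs (x, (1:ℤ)) → u ∈ S → u = (x, 2) := by
        rintro ⟨u1, u2⟩ hu huS
        simp only [nbrs, Set.mem_setOf_eq] at hu
        obtain ⟨rfl, h | h⟩ | ⟨rfl, h | h⟩ := hu
        · norm_num at h; subst h; rfl
        · norm_num at h; subst h; exact absurd huS h0.1
        · subst h; exact absurd huS hp.2
        · subst h; exact absurd huS hm.2
      constructor <;> intro h <;>
        rcases h with h | ⟨u, w, hu, hw, huw, huS, hwS⟩
      · exact h0.1 h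
      · exact huw ((key0 u hu huS).trans (key0 w hw hwS).symm)
      · exact h0.2 h
      · exact huw ((key1 u hu huS).trans (key1 w hw hwS).symm)
  exact key t t (le_refl _) (by omega)
end

section
/- Let σ ≥ 1 be an integer, γ > σ+1, and p ∈ (0,1) with γ = p^{−3}. Let a, b, c, h be non-negative reals satisfying a + σb + γc ≥ h and c ≤ hp/γ, and let ε, p be sufficiently small absolute constants. Then ((εh)/(a+b+c))^{a+b+c} · p^{b+2c} ≤ e^{−(a+b+c)}. -/
/-- appendix calculation. Let `σ ≥ 1` be an integer, `p ∈ (0,1)` with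
`γ = p^{−3} > σ + 1`, and let `a,b,c,h ≥ 0` satisfy `a + σb + γc ≥ h` and `c ≤ hp/γ`.
If `ε` and `p` are sufficiently small absolute constants (with `p < e^{−(σ−1)}`), then
`((εh)/(a+b+c))^{a+b+c} · p^{b+2c} ≤ e^{−(a+b+c)}`. -/
theorem stmt15 :
    ∃ ε₀ > (0 : ℝ), ∃ p₀ > (0 : ℝ), ∀ σ : ℕ, 1 ≤ σ →
      ∀ p : ℝ, 0 < p → p ≤ p₀ → p < Real.exp (-((σ : ℝ) - 1)) →
      ∀ ε : ℝ, 0 < ε → ε ≤ ε₀ →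
      ∀ a b c h : ℝ, 0 ≤ a → 0 ≤ b → 0 ≤ c → 0 ≤ h →
        (σ : ℝ) + 1 < p ^ (-(3 : ℝ)) →
        h ≤ a + (σ : ℝ) * b + p ^ (-(3 : ℝ)) * c →
        c ≤ h * p / p ^ (-(3 : ℝ)) →
        0 < a + b + c →
        (ε * h / (a + b + c)) ^ (a + b + c) * p ^ (b + 2 * c) ≤
          Real.exp (-(a + b + c)) := by
  refine ⟨Real.exp (-3) / 2, by positivity, 1/2, by norm_num, ?_⟩
  intro σ hσ p hp hpp₀ hpσ ε hε hεε₀ a b c h ha hb hc hh hγσ hhab hcγ hs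
  set s := a + b + c with hsdef
  have hp1 : p < 1 := lt_of_le_of_lt hpp₀ (by norm_num)
  have hlogp : Real.log p < 0 := Real.log_neg hp hp1
  set L : ℝ := -Real.log p with hLdef
  have hL0 : 0 < L := by simp [hLdef]; linarith
  have hγpos : (0:ℝ) < p ^ (-(3:ℝ)) := Real.rpow_pos_of_pos hp _
  have hγc : p ^ (-(3:ℝ)) * c ≤ h * p := by
    calc p ^ (-(3:ℝ)) * c ≤ p ^ (-(3:ℝ)) * (h * p / p ^ (-(3:ℝ))) := by
          exact mul_le_mul_of_nonneg_left hcγ (le_of_lt hγpos)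
      _ = h * p := by field_simp
  have hhab2 : h * (1 - p) ≤ a + (σ:ℝ) * b := by nlinarith
  have hσL : (σ:ℝ) ≤ 1 + L := by
    have := Real.log_lt_log hp hpσ
    rw [Real.log_exp] at this
    simp only [hLdef]; linarith
  have hkey : h ≤ 2 * s + 2 * (1 + L) * (b + 2 * c) := by nlinarith
  set d := b + 2 * c with hddef
  have hd0 : 0 ≤ d := by positivity
  have hd2s : d ≤ 2 * s := by simp only [hddef, hsdef]; linarith
  rcases eq_or_lt_of_le hh with h0 | hh'
  · rw [← h0]
    rw [mul_zero, zero_div, Real.zero_rpow (ne_of_gt hs), zero_mul]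
    positivity
  · set x := ε * h / s with hxdef
    have hx0 : 0 < x := by positivity
    clear_value x s L d
    have hu0 : 0 ≤ (1 + L) * d / s := by positivity
    have hxle : x ≤ 2 * ε * Real.exp ((1 + L) * d / s) := by
      have h1 : (1 : ℝ) + (1 + L) * d / s ≤ Real.exp ((1 + L) * d / s) := by
        linarith [Real.add_one_le_exp ((1 + L) * d / s)]
      have h2 : x ≤ 2 * ε * (1 + (1 + L) * d / s) := by
        rw [hxdef, div_le_iff₀ hs]
        have : 2 * ε * (1 + (1 + L) * d / s) * s = 2 * ε * (s + (1 + L) * d) := by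
          field_simp
        rw [this]
        nlinarith
      calc x ≤ 2 * ε * (1 + (1 + L) * d / s) := h2
        _ ≤ 2 * ε * Real.exp ((1 + L) * d / s) := by nlinarith
    have hlogx : Real.log x ≤ Real.log (2 * ε) + (1 + L) * d / s := by
      calc Real.log x ≤ Real.log (2 * ε * Real.exp ((1 + L) * d / s)) :=
            Real.log_le_log hx0 hxle
        _ = Real.log (2 * ε) + (1 + L) * d / s := by
            rw [Real.log_mul (by positivity) (Real.exp_ne_zero _), Real.log_exp]
    have hlog2ε : Real.log (2 * ε) ≤ -3 := by
      have h2ε : 2 * ε ≤ Real.exp (-3) := by linarith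
      calc Real.log (2 * ε) ≤ Real.log (Real.exp (-3)) :=
            Real.log_le_log (by positivity) h2ε
        _ = -3 := Real.log_exp _
    have hmain : Real.log x * s + Real.log p * d ≤ -s := by
      have h1 : Real.log x * s ≤ Real.log (2 * ε) * s + (1 + L) * d := by
        have := mul_le_mul_of_nonneg_right hlogx (le_of_lt hs)
        have hdiv : ((1 + L) * d / s) * s = (1 + L) * d := div_mul_cancel₀ _ (ne_of_gt hs)
        calc Real.log x * s ≤ (Real.log (2 * ε) + (1 + L) * d / s) * s := this
          _ = Real.log (2 * ε) * s + ((1 + L) * d / s) * s := by ring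
          _ = Real.log (2 * ε) * s + (1 + L) * d := by rw [hdiv]
      have h2 : Real.log p * d = -(L * d) := by rw [hLdef]; ring
      have hLd : (1 + L) * d - L * d = d := by ring
      have hmul : Real.log (2 * ε) * s ≤ -3 * s :=
        mul_le_mul_of_nonneg_right hlog2ε hs.le
      rw [h2]
      linarith
    calc x ^ s * p ^ d
        = Real.exp (Real.log x * s) * Real.exp (Real.log p * d) := by
          rw [Real.rpow_def_of_pos hx0, Real.rpow_def_of_pos hp]
      _ = Real.exp (Real.log x * s + Real.log p * d) := (Real.exp_add _ _).symm
      _ ≤ Real.exp (-s) := Real.exp_le_exp.mpr hmain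
end

section
/- Let E and F be increasing events and G a decreasing event in the product probability space {0,1}^S with independent Bernoulli(p) coordinates over a finite set S. Then P(E ∩ F) ≥ P(E)·P(F) and P(E ∩ G) ≤ P(E)·P(G). -/
open MeasureTheory
open scoped ENNReal

/-- The Bernoulli PMF with an `ℝ≥0∞` parameter, as `PMF.bernoulli` was defined in the older
Mathlib (it now takes an `ℝ≥0` parameter and is deprecated). -/
noncomputable def PMF.bernoulliENNReal (p : ℝ≥0∞) (h : p ≤ 1) : PMF Bool :=
  PMF.ofFintype (fun b => cond b p (1 - p)) (by simp [h])

open MeasureTheory Finset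
open scoped ENNReal NNReal Classical

section aux
variable {S : Type*} [Fintype S]

noncomputable def bw (q : ℝ≥0) (ω : S → Bool) : ℝ≥0 :=
  ∏ i, (if ω i then q else 1 - q)

theorem bool_inf (x y : Bool) : x ⊓ y = (x && y) := by cases x <;> cases y <;> decide
theorem bool_sup (x y : Bool) : x ⊔ y = (x || y) := by cases x <;> cases y <;> decide

theorem bw_combine (q : ℝ≥0) (a b : S → Bool) :
    bw q a * bw q b = bw q (a ⊓ b) * bw q (a ⊔ b) := by
  unfold bw
  rw [← Finset.prod_mul_distrib, ← Finset.prod_mul_distrib]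
  refine Finset.prod_congr rfl fun i _ => ?_
  have h1 : (a ⊓ b) i = (a i && b i) := bool_inf (a i) (b i)
  have h2 : (a ⊔ b) i = (a i || b i) := bool_sup (a i) (b i)
  rw [h1, h2]
  cases a i <;> cases b i <;> simp [mul_comm]

theorem meas_eq (p : ℝ≥0∞) (hp : p ≤ 1) (A : Set (S → Bool)) (hA : MeasurableSet A) :
    (Measure.pi fun _ : S => (PMF.bernoulliENNReal p hp).toMeasure) A
      = ↑(∑ ω, Set.indicator A (bw p.toNNReal) ω) := by
  have hpt : (p.toNNReal : ℝ≥0∞) = p := ENNReal.coe_toNNReal (lt_of_le_of_lt hp ENNReal.one_lt_top).ne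
  have hsingle : ∀ ω : S → Bool,
      (Measure.pi fun _ : S => (PMF.bernoulliENNReal p hp).toMeasure) {ω} = ↑(bw p.toNNReal ω) := by
    intro ω
    have : ({ω} : Set (S → Bool)) = Set.pi Set.univ (fun i => {ω i}) := by
      ext x; simp [funext_iff, Set.mem_pi, eq_comm]
    rw [this, Measure.pi_pi]
    unfold bw
    push_cast
    refine Finset.prod_congr rfl fun i _ => ?_
    rw [PMF.toMeasure_apply_singleton _ _ (measurableSet_singleton _), PMF.bernoulliENNReal, PMF.ofFintype_apply]
    cases ω i
    · simp [ENNReal.coe_sub, hpt]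
    · simp [hpt]
  set T : Finset (S → Bool) := Finset.univ.filter (· ∈ A) with hT
  have hA' : A = ⋃ ω ∈ T, ({ω} : Set (S → Bool)) := by
    ext x; simp [hT]
  calc (Measure.pi fun _ : S => (PMF.bernoulliENNReal p hp).toMeasure) A
      = (Measure.pi fun _ : S => (PMF.bernoulliENNReal p hp).toMeasure) (⋃ ω ∈ T, ({ω} : Set (S → Bool))) := by rw [← hA']
    _ = ∑ ω ∈ T, (Measure.pi fun _ : S => (PMF.bernoulliENNReal p hp).toMeasure) {ω} := by
        refine measure_biUnion_finset ?_ fun ω _ => measurableSet_singleton ω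
        intro x _ y _ hxy
        simp [Set.disjoint_singleton, hxy]
    _ = ∑ ω ∈ T, ↑(bw p.toNNReal ω) := Finset.sum_congr rfl fun ω _ => hsingle ω
    _ = ↑(∑ ω, Set.indicator A (bw p.toNNReal) ω) := by
        push_cast
        rw [hT, Finset.sum_filter]
        refine Finset.sum_congr rfl fun ω _ => ?_
        by_cases h : ω ∈ A <;> simp [h]

end aux

/-- Harris / FKG for product Bernoulli measures. Let `E, F` be increasing
events and `G` a decreasing event in `{0,1}^S` (modelled as `S → Bool`) with independent
`Bernoulli(p)` coordinates over a finite set `S`. Then `P(E ∩ F) ≥ P(E)·P(F)` and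
`P(E ∩ G) ≤ P(E)·P(G)`. -/
theorem stmt18 {S : Type*} [Fintype S] (p : ℝ≥0∞) (hp : p ≤ 1)
    (E F G : Set (S → Bool))
    (hE : ∀ ω ω' : S → Bool, (∀ i, ω i ≤ ω' i) → ω ∈ E → ω' ∈ E)
    (hF : ∀ ω ω' : S → Bool, (∀ i, ω i ≤ ω' i) → ω ∈ F → ω' ∈ F)
    (hG : ∀ ω ω' : S → Bool, (∀ i, ω i ≤ ω' i) → ω' ∈ G → ω ∈ G)
    (hEm : MeasurableSet E) (hFm : MeasurableSet F) (hGm : MeasurableSet G) :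
    (Measure.pi fun _ : S => (PMF.bernoulliENNReal p hp).toMeasure) E *
        (Measure.pi fun _ : S => (PMF.bernoulliENNReal p hp).toMeasure) F ≤
      (Measure.pi fun _ : S => (PMF.bernoulliENNReal p hp).toMeasure) (E ∩ F) ∧
    (Measure.pi fun _ : S => (PMF.bernoulliENNReal p hp).toMeasure) (E ∩ G) ≤
      (Measure.pi fun _ : S => (PMF.bernoulliENNReal p hp).toMeasure) E *
        (Measure.pi fun _ : S => (PMF.bernoulliENNReal p hp).toMeasure) G := by
  set q := p.toNNReal with hqdef
  set w : (S → Bool) → ℝ≥0 := bw q with hw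
  -- total mass 1
  have htot : (∑ ω, w ω) = 1 := by
    have h1 := meas_eq (S := S) p hp Set.univ MeasurableSet.univ
    rw [measure_univ] at h1
    have h2 : (∑ ω : S → Bool, Set.indicator Set.univ (bw p.toNNReal) ω) = ∑ ω, w ω := by
      refine Finset.sum_congr rfl fun ω _ => ?_
      simp [hw, hqdef]
    rw [h2] at h1
    exact_mod_cast h1.symm
  have indMono : ∀ A : Set (S → Bool), (∀ ω ω' : S → Bool, (∀ i, ω i ≤ ω' i) → ω ∈ A → ω' ∈ A) →
      Monotone (Set.indicator A (fun _ => (1 : ℝ≥0))) := by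
    intro A hA ω ω' hle
    by_cases h : ω ∈ A
    · simp [Set.indicator_of_mem, h, Set.indicator_of_mem (hA ω ω' (fun i => hle i) h)]
    · simp [Set.indicator_of_notMem, h]
  -- FKG core
  have core : ∀ A B : Set (S → Bool),
      (∀ ω ω' : S → Bool, (∀ i, ω i ≤ ω' i) → ω ∈ A → ω' ∈ A) →
      (∀ ω ω' : S → Bool, (∀ i, ω i ≤ ω' i) → ω ∈ B → ω' ∈ B) →
      (∑ ω, Set.indicator A w ω) * (∑ ω, Set.indicator B w ω)
        ≤ ∑ ω, Set.indicator (A ∩ B) w ω := by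
    intro A B hA hB
    have h := fkg (μ := w) (f := Set.indicator A (fun _ => (1 : ℝ≥0)))
      (g := Set.indicator B (fun _ => (1 : ℝ≥0)))
      (fun ω => zero_le) (fun ω => zero_le) (fun ω => zero_le)
      (indMono A hA) (indMono B hB)
      (fun a b => le_of_eq (bw_combine q a b))
    rw [htot, one_mul] at h
    have e1 : ∀ C : Set (S → Bool),
        (∑ ω, w ω * Set.indicator C (fun _ => (1 : ℝ≥0)) ω) = ∑ ω, Set.indicator C w ω := by
      intro C
      refine Finset.sum_congr rfl fun ω _ => ?_
      by_cases h : ω ∈ C <;> simp [h]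
    have e3 : (∑ ω, w ω * (Set.indicator A (fun _ => (1 : ℝ≥0)) ω *
        Set.indicator B (fun _ => (1 : ℝ≥0)) ω)) = ∑ ω, Set.indicator (A ∩ B) w ω := by
      refine Finset.sum_congr rfl fun ω _ => ?_
      by_cases h1 : ω ∈ A <;> by_cases h2 : ω ∈ B <;>
        simp [h1, h2, Set.indicator_of_mem, Set.indicator_of_notMem, Set.mem_inter_iff]
    rw [e1 A, e1 B, e3] at h
    exact h
  have mE := meas_eq (S := S) p hp E hEm
  have mF := meas_eq (S := S) p hp F hFm
  have mG := meas_eq (S := S) p hp G hGm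
  have mEF := meas_eq (S := S) p hp (E ∩ F) (hEm.inter hFm)
  have mEG := meas_eq (S := S) p hp (E ∩ G) (hEm.inter hGm)
  constructor
  · rw [mE, mF, mEF, ← ENNReal.coe_mul, ENNReal.coe_le_coe]
    exact core E F hE hF
  · rw [mE, mG, mEG, ← ENNReal.coe_mul, ENNReal.coe_le_coe]
    have hGc : ∀ ω ω' : S → Bool, (∀ i, ω i ≤ ω' i) → ω ∈ Gᶜ → ω' ∈ Gᶜ := by
      intro ω ω' hle hω hω'
      exact hω (hG ω ω' hle hω')
    have hcore := core E Gᶜ hE hGc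
    set a : ℝ≥0 := ∑ ω, Set.indicator (E ∩ G) w ω with ha
    set b : ℝ≥0 := ∑ ω, Set.indicator (E ∩ Gᶜ) w ω with hb
    set e : ℝ≥0 := ∑ ω, Set.indicator E w ω with he
    set g : ℝ≥0 := ∑ ω, Set.indicator G w ω with hg
    set c : ℝ≥0 := ∑ ω, Set.indicator Gᶜ w ω with hc
    have hab : a + b = e := by
      rw [ha, hb, he, ← Finset.sum_add_distrib]
      refine Finset.sum_congr rfl fun ω _ => ?_
      by_cases h1 : ω ∈ E <;> by_cases h2 : ω ∈ G <;>
        simp [h1, h2, Set.indicator_apply, Set.mem_inter_iff]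
    have hgc : g + c = 1 := by
      rw [hg, hc, ← Finset.sum_add_distrib, ← htot]
      refine Finset.sum_congr rfl fun ω _ => ?_
      by_cases h2 : ω ∈ G <;> simp [h2, Set.indicator_apply]
    have key : a + e * c ≤ e * g + e * c := by
      calc a + e * c ≤ a + b := add_le_add_right hcore _
        _ = e := hab
        _ = e * (g + c) := by rw [hgc, mul_one]
        _ = e * g + e * c := mul_add e g c
    exact le_of_add_le_add_right key
end
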